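/- arXiv:2212.13649 — 9 statements merged into one kernel-verified Lean document; each statement's English description precedes it below -/
import Mathlib

section
/- For every z ≥ 0, the smallest eigenvalue λ0 of H(z) satisfies λ0 < z·min_s E(s), while every other eigenvalue of H(z) (counted with multiplicity) is ≥ z·min_s E(s); in particular λ0 is a simple eigenvalue of H(z). -/
/-- The annealing Hamiltonian `H(z) = z·D − |φ⟩⟨φ|`. -/
noncomputable def Ham (N : ℕ) (E : Fin N → ℕ) (z : ℝ) : Matrix (Fin N) (Fin N) ℂ :=
  fun s s' => (if s = s' then ((z * (E s : ℝ) : ℝ) : ℂ) else 0) - 1 / (N : ℂ)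

open Matrix Finset in
lemma Ham_mulVec {N : ℕ} (E : Fin N → ℕ) (z : ℝ) (v : Fin N → ℂ) (s : Fin N) :
    (Ham N E z *ᵥ v) s = ((z * (E s : ℝ) : ℝ) : ℂ) * v s - (∑ t, v t) / N := by
  unfold Ham
  simp only [Matrix.mulVec, dotProduct, sub_mul, Finset.sum_sub_distrib, ite_mul, zero_mul,
    Finset.sum_ite_eq, Finset.mem_univ, if_true]
  congr 1
  rw [Finset.sum_div]
  exact Finset.sum_congr rfl fun t _ => by ring

open Matrix in
lemma eig_formula {N : ℕ} {E : Fin N → ℕ} {z lam : ℝ}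
    (hlt : ∀ s : Fin N, lam < z * (E s : ℝ))
    {v : Fin N → ℂ} (hv : Ham N E z *ᵥ v = lam • v) (s : Fin N) :
    v s = ((∑ t, v t) / N) / ((z * (E s : ℝ) - lam : ℝ) : ℂ) := by
  have h := congrFun hv s
  rw [Ham_mulVec] at h
  have hd : ((z * (E s : ℝ) - lam : ℝ) : ℂ) ≠ 0 := by
    exact_mod_cast (sub_pos.mpr (hlt s)).ne'
  rw [eq_div_iff hd]
  have hsm : (lam • v) s = (lam : ℂ) * v s := by
    simp [Pi.smul_apply, Complex.real_smul]
  rw [hsm] at h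
  push_cast at h ⊢
  linear_combination h

open Matrix in
lemma herm_shift {N : ℕ} {A : Matrix (Fin N) (Fin N) ℂ} (hA : A.IsHermitian)
    (u x : Fin N → ℂ) :
    star u ⬝ᵥ (A *ᵥ x) = star (A *ᵥ u) ⬝ᵥ x := by
  rw [Matrix.star_mulVec, hA.eq, Matrix.dotProduct_mulVec]

open Matrix

/-- for `z ≥ 0` the smallest eigenvalue of `H(z)` is strictly below
`z · min_s E(s)`, all the other eigenvalues (with multiplicity) are `≥ z · min_s E(s)`,
and in particular the smallest eigenvalue is simple. -/
theorem stmt_1 (N : ℕ) (hN : 1 ≤ N) (E : Fin N → ℕ) (z : ℝ) (hz : 0 ≤ z)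
    (hH : (Ham N E z).IsHermitian) :
    ∃ i0 : Fin N, hH.eigenvalues i0 < z * ((⨅ s : Fin N, E s : ℕ) : ℝ) ∧
      ∀ i : Fin N, i ≠ i0 → z * ((⨅ s : Fin N, E s : ℕ) : ℝ) ≤ hH.eigenvalues i := by
  classical
  set m : ℕ := ⨅ s : Fin N, E s with hm
  set c : ℝ := z * (m : ℝ) with hc
  have hNpos : 0 < N := hN
  have hNR : (0:ℝ) < N := by exact_mod_cast hNpos
  have hne : Nonempty (Fin N) := Fin.pos_iff_nonempty.mp hNpos
  have hmle : ∀ s : Fin N, m ≤ E s := fun s => Nat.sInf_le ⟨s, rfl⟩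
  obtain ⟨s0, hs0⟩ : ∃ s0 : Fin N, E s0 = m := by
    obtain ⟨s0, hs0⟩ := Nat.sInf_mem (Set.range_nonempty E)
    exact ⟨s0, hs0⟩
  have hcle : ∀ s : Fin N, c ≤ z * (E s : ℝ) := fun s =>
    mul_le_mul_of_nonneg_left (by exact_mod_cast hmle s) hz
  set b := hH.eigenvectorBasis with hb
  -- uniqueness: at most one eigenvalue < c
  have uniq : ∀ i j : Fin N, hH.eigenvalues i < c → hH.eigenvalues j < c → i = j := by
    intro i j hi hj
    by_contra hij
    set li := hH.eigenvalues i with hli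
    set lj := hH.eigenvalues j with hlj
    have hlti : ∀ s, li < z * (E s : ℝ) := fun s => lt_of_lt_of_le hi (hcle s)
    have hltj : ∀ s, lj < z * (E s : ℝ) := fun s => lt_of_lt_of_le hj (hcle s)
    have hvi := eig_formula hlti (hH.mulVec_eigenvectorBasis i)
    have hvj := eig_formula hltj (hH.mulVec_eigenvectorBasis j)
    set v : Fin N → ℂ := ⇑(b i) with hv
    set w : Fin N → ℂ := ⇑(b j) with hw
    set Sv : ℂ := ∑ t, v t with hSv
    set Sw : ℂ := ∑ t, w t with hSw
    have hSvne : Sv ≠ 0 := by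
      intro h0
      apply b.orthonormal.ne_zero i
      apply PiLp.ext
      intro s
      show v s = (0 : Fin N → ℂ) s
      rw [hvi s, h0]
      simp
    have hSwne : Sw ≠ 0 := by
      intro h0
      apply b.orthonormal.ne_zero j
      apply PiLp.ext
      intro s
      show w s = (0 : Fin N → ℂ) s
      rw [hvj s, h0]
      simp
    set r : Fin N → ℝ := fun s =>
      1 / ((N * (z * (E s : ℝ) - li)) * (N * (z * (E s : ℝ) - lj))) with hr
    have hrpos : ∀ s, 0 < r s := fun s => by
      apply one_div_pos.mpr
      exact mul_pos (mul_pos hNR (sub_pos.mpr (hlti s))) (mul_pos hNR (sub_pos.mpr (hltj s)))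
    have term_eq : ∀ s : Fin N, (starRingEnd ℂ) (v s) * w s =
        (starRingEnd ℂ) Sv * Sw * ((r s : ℝ) : ℂ) := by
      intro s
      rw [hvi s, hvj s]
      have hdi : ((z * (E s : ℝ) - li : ℝ) : ℂ) ≠ 0 := by
        exact_mod_cast (sub_pos.mpr (hlti s)).ne'
      have hdj : ((z * (E s : ℝ) - lj : ℝ) : ℂ) ≠ 0 := by
        exact_mod_cast (sub_pos.mpr (hltj s)).ne'
      have hNC : (N : ℂ) ≠ 0 := by exact_mod_cast hNpos.ne'
      rw [hr]
      push_cast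
      simp only [map_div₀, map_sub, _root_.map_mul, Complex.conj_ofReal, map_natCast]
      field_simp
    have horth : (0:ℂ) = ∑ s, (starRingEnd ℂ) (v s) * w s := by
      have h0 : (inner ℂ (b i) (b j) : ℂ) = 0 := b.orthonormal.2 hij
      rw [← h0]
      simp [PiLp.inner_apply, RCLike.inner_apply, hv, hw]
      exact Finset.sum_congr rfl fun _ _ => mul_comm _ _
    rw [Finset.sum_congr rfl (fun s _ => term_eq s), ← Finset.mul_sum, ← Complex.ofReal_sum] at horth
    have hRpos : (0:ℝ) < ∑ s, r s := Finset.sum_pos (fun s _ => hrpos s) Finset.univ_nonempty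
    have : (starRingEnd ℂ) Sv * Sw * ((∑ s, r s : ℝ) : ℂ) ≠ 0 := by
      apply mul_ne_zero (mul_ne_zero _ hSwne)
      · exact_mod_cast hRpos.ne'
      · simpa using hSvne
    exact this horth.symm
  -- existence: some eigenvalue < c
  have exi : ∃ i : Fin N, hH.eigenvalues i < c := by
    by_contra hcon
    push_neg at hcon
    set X : Fin N → ℂ := fun s => if s = s0 then 1 else 0 with hX
    set x : EuclideanSpace ℂ (Fin N) := (WithLp.equiv 2 _).symm X with hx
    set y : EuclideanSpace ℂ (Fin N) := (WithLp.equiv 2 _).symm (Ham N E z *ᵥ X) with hy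
    -- ⟪b k, y⟫ = λ_k * ⟪b k, x⟫
    have hbky : ∀ k : Fin N, (inner ℂ (b k) y : ℂ) = (hH.eigenvalues k : ℂ) * inner ℂ (b k) x := by
      intro k
      have h1 : (inner ℂ (b k) y : ℂ) = star ⇑(b k) ⬝ᵥ (Ham N E z *ᵥ X) := by
        unfold dotProduct; rw [PiLp.inner_apply]; exact Finset.sum_congr rfl fun _ _ => by rw [RCLike.inner_apply]; exact mul_comm _ _
      have h3 : (inner ℂ (b k) x : ℂ) = star ⇑(b k) ⬝ᵥ X := by
        unfold dotProduct; rw [PiLp.inner_apply]; exact Finset.sum_congr rfl fun _ _ => by rw [RCLike.inner_apply]; exact mul_comm _ _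
      rw [h1, h3, herm_shift hH, hH.mulVec_eigenvectorBasis k]
      have h4 : star ((hH.eigenvalues k) • ⇑(b k)) = (hH.eigenvalues k : ℂ) • star ⇑(b k) := by
        ext s
        simp [Complex.real_smul, _root_.map_mul, Complex.conj_ofReal]
      rw [h4, smul_dotProduct, smul_eq_mul]
    have hxy : (inner ℂ x y : ℂ) = ∑ k, (hH.eigenvalues k : ℂ) * (Complex.normSq (inner ℂ (b k) x : ℂ) : ℂ) := by
      rw [← b.sum_inner_mul_inner x y]
      apply Finset.sum_congr rfl
      intro k _
      rw [hbky k]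
      have h5 : (inner ℂ x (b k) : ℂ) = (starRingEnd ℂ) (inner ℂ (b k) x : ℂ) :=
        (inner_conj_symm _ _).symm
      rw [h5, Complex.normSq_eq_conj_mul_self]
      ring
    have hxx : (inner ℂ x x : ℂ) = ∑ k, (Complex.normSq (inner ℂ (b k) x : ℂ) : ℂ) := by
      rw [← b.sum_inner_mul_inner x x]
      apply Finset.sum_congr rfl
      intro k _
      have h5 : (inner ℂ x (b k) : ℂ) = (starRingEnd ℂ) (inner ℂ (b k) x : ℂ) :=
        (inner_conj_symm _ _).symm
      rw [h5, Complex.normSq_eq_conj_mul_self]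
    have hxx1 : (inner ℂ x x : ℂ) = 1 := by
      have h6 : (inner ℂ x x : ℂ) = ∑ s, (starRingEnd ℂ) (X s) * X s := by rw [PiLp.inner_apply]; exact Finset.sum_congr rfl fun _ _ => by rw [RCLike.inner_apply]; exact mul_comm _ _
      rw [h6]
      rw [Finset.sum_eq_single s0]
      · simp [hX]
      · intro t _ ht
        simp [hX, ht]
      · simp
    have hlhs : (inner ℂ x y : ℂ) = ((z * (E s0 : ℝ) : ℝ) : ℂ) - 1 / N := by
      have h1 : (inner ℂ x y : ℂ) = ∑ s, (starRingEnd ℂ) (X s) * (Ham N E z *ᵥ X) s := by rw [PiLp.inner_apply]; exact Finset.sum_congr rfl fun _ _ => by rw [RCLike.inner_apply]; exact mul_comm _ _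
      have hsum : (∑ t, X t) = 1 := by simp [hX]
      rw [h1]
      rw [Finset.sum_eq_single s0]
      · rw [Ham_mulVec, hsum]
        simp [hX]
      · intro t _ ht
        simp [hX, ht]
      · simp
    have hre1 : (inner ℂ x y : ℂ).re = z * (E s0 : ℝ) - 1 / N := by
      rw [hlhs]
      simp
    have hre2 : (inner ℂ x y : ℂ).re = ∑ k, hH.eigenvalues k * Complex.normSq (inner ℂ (b k) x : ℂ) := by
      rw [hxy, Complex.re_sum]
      apply Finset.sum_congr rfl
      intro k _
      rw [← Complex.ofReal_mul]
      exact Complex.ofReal_re _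
    have hsumsq : (∑ k, Complex.normSq (inner ℂ (b k) x : ℂ)) = 1 := by
      have h7 := hxx.symm.trans hxx1
      have h8 : ((∑ k, Complex.normSq (inner ℂ (b k) x : ℂ) : ℝ) : ℂ) = 1 := by
        push_cast
        exact h7
      exact_mod_cast h8
    have hge : c ≤ (inner ℂ x y : ℂ).re := by
      rw [hre2]
      calc c = ∑ k, c * Complex.normSq (inner ℂ (b k) x : ℂ) := by
            rw [← Finset.mul_sum, hsumsq, mul_one]
        _ ≤ ∑ k, hH.eigenvalues k * Complex.normSq (inner ℂ (b k) x : ℂ) := by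
            apply Finset.sum_le_sum
            intro k _
            exact mul_le_mul_of_nonneg_right (hcon k) (Complex.normSq_nonneg _)
    rw [hre1, hs0] at hge
    rw [hc] at hge
    have hpos : (0:ℝ) < 1 / N := by positivity
    linarith
  obtain ⟨i0, hi0⟩ := exi
  refine ⟨i0, hi0, fun i hii0 => ?_⟩
  by_contra hlt
  push_neg at hlt
  exact hii0 (uniq i i0 hlt hi0)
end

section
/- Let z > 0 and let e < e' be natural numbers that are both attained as values of E and such that no state s satisfies e < E(s) < e'. Then H(z) has exactly one eigenvalue, counted with multiplicity, in the open interval (z·e, z·e'); in particular that eigenvalue is simple. -/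
open Matrix in
private lemma ham_mulVec (N : ℕ) (E : Fin N → ℕ) (z : ℝ) (v : Fin N → ℂ) (s : Fin N) :
    (Ham N E z *ᵥ v) s = ((z * (E s : ℝ) : ℝ) : ℂ) * v s - (∑ t, v t) / N := by
  classical
  have h : (Ham N E z *ᵥ v) s
      = ∑ t, (((if s = t then ((z * (E s : ℝ) : ℝ) : ℂ) else 0) * v t) - v t / N) := by
    simp only [Ham, mulVec, dotProduct, sub_mul, one_div]
    exact Finset.sum_congr rfl fun t _ => by ring
  rw [h, Finset.sum_sub_distrib, ← Finset.sum_div]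
  congr 1
  simp

open Matrix Complex in
/-- if `e < e'` are consecutive attained energy values, then `H(z)` has
exactly one eigenvalue, counted with multiplicity, in the open interval `(z·e, z·e')`;
in particular that eigenvalue is simple. -/
theorem stmt_2 (N : ℕ) (hN : 1 ≤ N) (E : Fin N → ℕ) (z : ℝ) (hz : 0 < z)
    (hH : (Ham N E z).IsHermitian) (e e' : ℕ) (hee : e < e')
    (he : ∃ s, E s = e) (he' : ∃ s, E s = e')
    (hgap : ∀ s : Fin N, ¬(e < E s ∧ E s < e')) :
    ∃! i : Fin N, z * (e : ℝ) < hH.eigenvalues i ∧ hH.eigenvalues i < z * (e' : ℝ) := by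
  classical
  obtain ⟨s0, hs0⟩ := he
  obtain ⟨s1, hs1⟩ := he'
  set A := Ham N E z with hAdef
  set a : ℝ := z * e with ha
  set b : ℝ := z * e' with hb
  have hab : a < b := by
    apply mul_lt_mul_of_pos_left _ hz
    exact_mod_cast hee
  have hNne : (N : ℂ) ≠ 0 := Nat.cast_ne_zero.mpr (by omega)
  set μ := hH.eigenvalues with hμ
  set U : Matrix (Fin N) (Fin N) ℂ := (hH.eigenvectorUnitary : Matrix (Fin N) (Fin N) ℂ)
    with hUdef
  have hU1 : U * star U = 1 := mem_unitaryGroup_iff.mp hH.eigenvectorUnitary.2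
  have hU2 : star U * U = 1 := mem_unitaryGroup_iff'.mp hH.eigenvectorUnitary.2
  set p : Fin N → ℝ := fun i => (μ i - a) * (μ i - b) with hp
  set q : Fin N → ℝ := fun s => (z * E s - a) * (z * E s - b) with hq
  have hqnonneg : ∀ s, 0 ≤ q s := by
    intro s
    show 0 ≤ (z * (E s : ℝ) - a) * (z * (E s : ℝ) - b)
    rcases not_and_or.mp (hgap s) with h | h
    · have h1 : (E s : ℝ) ≤ e := by exact_mod_cast Nat.le_of_not_lt h
      have h2 : z * E s ≤ a := by
        rw [ha]; exact mul_le_mul_of_nonneg_left h1 hz.le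
      nlinarith [h2, hab]
    · have h1 : (e' : ℝ) ≤ E s := by exact_mod_cast Nat.le_of_not_lt h
      have h2 : b ≤ z * E s := by
        rw [hb]; exact mul_le_mul_of_nonneg_left h1 hz.le
      nlinarith [h2, hab]
  set P : Matrix (Fin N) (Fin N) ℂ := (A - (a : ℂ) • 1) * (A - (b : ℂ) • 1) with hPdef
  -- spectral form of A - t•1 and of P
  have hst : A = U * diagonal (fun i => ((μ i : ℝ) : ℂ)) * star U := hH.spectral_theorem
  have hsub : ∀ t : ℝ, A - (t : ℂ) • 1 = U * diagonal (fun i => (μ i : ℂ) - t) * star U := by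
    intro t
    have h1 : ((t : ℂ) • (1 : Matrix (Fin N) (Fin N) ℂ)) = U * ((t : ℂ) • 1) * star U := by
      rw [mul_smul_comm, mul_one, smul_mul_assoc, hU1]
    conv_lhs => rw [hst, h1]
    rw [← sub_mul, ← mul_sub]
    have h2 : ((t : ℂ) • (1 : Matrix (Fin N) (Fin N) ℂ))
        = diagonal (fun _ : Fin N => (t : ℂ)) := by
      ext i j
      by_cases h : i = j <;>
        simp [h, Matrix.one_apply, Matrix.diagonal_apply, Matrix.smul_apply]
    rw [h2, diagonal_sub]
  have hPspec : P = U * diagonal (fun i => ((p i : ℝ) : ℂ)) * star U := by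
    rw [hPdef, hsub a, hsub b]
    simp only [Matrix.mul_assoc]
    rw [← Matrix.mul_assoc (star U) U (diagonal _ * star U), hU2, one_mul,
      ← Matrix.mul_assoc (diagonal _) (diagonal _) (star U), diagonal_mul_diagonal]
    congr
    funext i
    push_cast [hp]
    ring
  have hPmulU : P * U = U * diagonal (fun i => ((p i : ℝ) : ℂ)) := by
    rw [hPspec, Matrix.mul_assoc (U * diagonal _) (star U) U, hU2, mul_one]
  have hPvspec : ∀ c : Fin N → ℂ, P *ᵥ (U *ᵥ c) = U *ᵥ fun i => ((p i : ℝ) : ℂ) * c i := by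
    intro c
    rw [mulVec_mulVec, hPmulU, ← mulVec_mulVec]
    have hd : diagonal (fun i => ((p i : ℝ) : ℂ)) *ᵥ c = fun i => ((p i : ℝ) : ℂ) * c i :=
      funext fun i => mulVec_diagonal _ _ _
    rw [hd]
  have hiso : ∀ c w : Fin N → ℂ, star (U *ᵥ c) ⬝ᵥ (U *ᵥ w) = star c ⬝ᵥ w := by
    intro c w
    rw [star_mulVec, dotProduct_mulVec, vecMul_vecMul, ← star_eq_conjTranspose, hU2, vecMul_one]
  have hrepr : ∀ v : Fin N → ℂ, U *ᵥ (star U *ᵥ v) = v := fun v => by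
    rw [mulVec_mulVec, hU1, one_mulVec]
  -- direct computations
  have hAv : ∀ (v : Fin N → ℂ) (s : Fin N),
      (A *ᵥ v) s = ((z * (E s : ℝ) : ℝ) : ℂ) * v s - (∑ t, v t) / N := by
    intro v s; rw [hAdef]; exact ham_mulVec N E z v s
  have hsmul : ∀ (t : ℝ) (v : Fin N → ℂ),
      (A - (t : ℂ) • 1) *ᵥ v = fun s => (A *ᵥ v) s - t * v s := by
    intro t v
    rw [sub_mulVec, smul_mulVec, one_mulVec]
    funext s
    simp [smul_eq_mul]
  have hwv : ∀ v : Fin N → ℂ, (∑ t, v t) = 0 →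
      (A - (b : ℂ) • 1) *ᵥ v = fun s => ((z * E s - b : ℝ) : ℂ) * v s := by
    intro v hv
    rw [hsmul]
    funext s
    rw [hAv, hv]
    push_cast
    ring
  have hPvdir : ∀ v : Fin N → ℂ, (∑ t, v t) = 0 →
      P *ᵥ v = fun s => ((q s : ℝ) : ℂ) * v s - (∑ t, ((z * E t - b : ℝ) : ℂ) * v t) / N := by
    intro v hv
    rw [hPdef, ← mulVec_mulVec, hwv v hv, hsmul]
    funext s
    rw [hAv]
    push_cast [hq]
    ring
  have hQdir : ∀ v : Fin N → ℂ, (∑ t, v t) = 0 →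
      star v ⬝ᵥ (P *ᵥ v) = ((∑ s, q s * normSq (v s) : ℝ) : ℂ) := by
    intro v hv
    rw [hPvdir v hv]
    have hconj : ∑ t, (starRingEnd ℂ) (v t) = 0 := by
      rw [← map_sum, hv, map_zero]
    simp only [dotProduct, Pi.star_apply, Complex.star_def, mul_sub]
    rw [Finset.sum_sub_distrib]
    have h2 : ∑ s, (starRingEnd ℂ) (v s)
        * ((∑ t, ((z * E t - b : ℝ) : ℂ) * v t) / N) = 0 := by
      rw [← Finset.sum_mul, hconj, zero_mul]
    rw [h2, sub_zero]
    push_cast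
    exact Finset.sum_congr rfl fun s _ => by
      calc (starRingEnd ℂ) (v s) * (((q s : ℝ) : ℂ) * v s)
          = ((q s : ℝ) : ℂ) * ((starRingEnd ℂ) (v s) * v s) := by ring
        _ = ((q s : ℝ) : ℂ) * ((normSq (v s) : ℝ) : ℂ) := by
            rw [← Complex.normSq_eq_conj_mul_self]
  have hQspec : ∀ c : Fin N → ℂ,
      star (U *ᵥ c) ⬝ᵥ (P *ᵥ (U *ᵥ c)) = ((∑ i, p i * normSq (c i) : ℝ) : ℂ) := by
    intro c
    rw [hPvspec, hiso]
    simp only [dotProduct, Pi.star_apply, Complex.star_def]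
    push_cast
    exact Finset.sum_congr rfl fun i _ => by
      calc (starRingEnd ℂ) (c i) * (((p i : ℝ) : ℂ) * c i)
          = ((p i : ℝ) : ℂ) * ((starRingEnd ℂ) (c i) * c i) := by ring
        _ = ((p i : ℝ) : ℂ) * ((normSq (c i) : ℝ) : ℂ) := by
            rw [← Complex.normSq_eq_conj_mul_self]
  have hkey : ∀ c : Fin N → ℂ, (∑ t, (U *ᵥ c) t) = 0 →
      (∑ i, p i * normSq (c i)) = ∑ s, q s * normSq ((U *ᵥ c) s) := by
    intro c hc
    have h1 := hQspec c
    rw [hQdir (U *ᵥ c) hc] at h1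
    exact_mod_cast h1.symm
  -- EXISTENCE
  have hexist : ∃ i, a < μ i ∧ μ i < b := by
    by_contra hcon
    push_neg at hcon
    have hpnonneg : ∀ i, 0 ≤ p i := by
      intro i
      show 0 ≤ (μ i - a) * (μ i - b)
      rcases le_or_gt (μ i) a with h | h
      · nlinarith [hab]
      · have h2 := hcon i h
        nlinarith [h2]
    have hs01 : s0 ≠ s1 := by
      intro h
      rw [h, hs1] at hs0
      omega
    set v : Fin N → ℂ := Pi.single s0 1 - Pi.single s1 1 with hv
    have hsumv : ∑ t, v t = 0 := by
      simp [hv, Finset.sum_sub_distrib, Pi.single_apply, Finset.sum_ite_eq']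
    set c := star U *ᵥ v with hc
    have hvc : U *ᵥ c = v := hrepr v
    have hsum0 : (∑ i, p i * normSq (c i)) = ∑ s, q s * normSq (v s) := by
      have := hkey c (by rw [hvc]; exact hsumv)
      rwa [hvc] at this
    have hqs0 : q s0 = 0 := by
      rw [hq]
      simp only [hs0]
      rw [ha]
      ring
    have hqs1 : q s1 = 0 := by
      rw [hq]
      simp only [hs1]
      rw [hb]
      ring
    have hRHS0 : ∑ s, q s * normSq (v s) = 0 := by
      apply Finset.sum_eq_zero
      intro s _
      by_cases h0 : s = s0
      · rw [h0, hqs0, zero_mul]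
      · by_cases h1 : s = s1
        · rw [h1, hqs1, zero_mul]
        · have : v s = 0 := by simp [hv, Pi.single_apply, h0, h1]
          rw [this]
          simp
    have hall : ∀ i, p i * normSq (c i) = 0 := by
      intro i
      exact (Finset.sum_eq_zero_iff_of_nonneg
        (fun i _ => mul_nonneg (hpnonneg i) (normSq_nonneg _))).mp
        (by rw [hsum0, hRHS0]) i (Finset.mem_univ i)
    have hPv0 : P *ᵥ v = 0 := by
      rw [← hvc, hPvspec]
      have hz0 : (fun i => ((p i : ℝ) : ℂ) * c i) = 0 := by
        funext i
        rcases mul_eq_zero.mp (hall i) with h | h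
        · simp [h]
        · simp [normSq_eq_zero.mp h]
      rw [hz0, mulVec_zero]
    have hs0v := congrFun (hPvdir v hsumv) s0
    rw [hPv0] at hs0v
    have hvs0 : v s0 = 1 := by simp [hv, Pi.single_apply, hs01]
    have hσ : (∑ t, ((z * E t - b : ℝ) : ℂ) * v t) = ((a - b : ℝ) : ℂ) := by
      have hterm : ∀ t, ((z * E t - b : ℝ) : ℂ) * v t
          = (if t = s0 then ((z * e - b : ℝ) : ℂ) else 0)
            - (if t = s1 then ((z * e' - b : ℝ) : ℂ) else 0) := by
        intro t
        by_cases h0 : t = s0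
        · subst h0
          simp [hv, Pi.single_apply, hs01, hs0]
        · by_cases h1 : t = s1
          · subst h1
            simp [hv, Pi.single_apply, Ne.symm hs01, hs1, h0]
          · simp [hv, Pi.single_apply, h0, h1]
      rw [Finset.sum_congr rfl fun t _ => hterm t, Finset.sum_sub_distrib]
      simp only [Finset.sum_ite_eq', Finset.mem_univ, if_true]
      rw [ha, hb]
      push_cast
      ring
    rw [hσ] at hs0v
    rw [hvs0, hqs0] at hs0v
    have : ((a - b : ℝ) : ℂ) = 0 := by
      have h3 : ((a - b : ℝ) : ℂ) / N = 0 := by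
        simpa using hs0v.symm
      exact (div_eq_zero_iff.mp h3).resolve_right hNne
    have : a - b = 0 := by exact_mod_cast this
    linarith
  -- UNIQUENESS
  obtain ⟨i0, hi0⟩ := hexist
  refine ⟨i0, hi0, fun j hj => ?_⟩
  by_contra hne
  have hpi0 : p i0 < 0 := mul_neg_of_pos_of_neg (by linarith [hi0.1]) (by linarith [hi0.2])
  have hpj : p j < 0 := mul_neg_of_pos_of_neg (by linarith [hj.1]) (by linarith [hj.2])
  set t : Fin N → ℂ := fun k => ∑ s, U s k with ht
  obtain ⟨α, β, hαβ, hne0⟩ : ∃ α β : ℂ, α * t j + β * t i0 = 0 ∧ ¬(α = 0 ∧ β = 0) := by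
    by_cases h0 : t j = 0 ∧ t i0 = 0
    · exact ⟨1, 0, by rw [h0.1, h0.2]; ring, by simp⟩
    · exact ⟨t i0, -(t j), by ring, fun h => h0 ⟨by simpa using h.2, h.1⟩⟩
  set c : Fin N → ℂ := Pi.single j α + Pi.single i0 β with hc
  have hcj : c j = α := by simp [hc, Pi.single_apply, hne]
  have hci0 : c i0 = β := by simp [hc, Pi.single_apply, Ne.symm hne]
  have hcother : ∀ k, k ≠ j → k ≠ i0 → c k = 0 := by
    intro k h1 h2
    simp [hc, Pi.single_apply, h1, h2]
  have hsumv : ∑ s, (U *ᵥ c) s = 0 := by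
    have h1 : ∑ s, (U *ᵥ c) s = ∑ k, t k * c k := by
      simp only [mulVec, dotProduct]
      rw [Finset.sum_comm]
      exact Finset.sum_congr rfl fun k _ => by
        rw [ht, ← Finset.sum_mul]
    rw [h1]
    have h2 : ∀ k, t k * c k = (if k = j then t j * α else 0)
        + (if k = i0 then t i0 * β else 0) := by
      intro k
      by_cases hkj : k = j
      · subst hkj
        rw [hcj]
        simp [hne]
      · by_cases hki : k = i0
        · subst hki
          rw [hci0]
          simp [hkj]
        · rw [hcother k hkj hki]
          simp [hkj, hki]
    rw [Finset.sum_congr rfl fun k _ => h2 k, Finset.sum_add_distrib]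
    simp only [Finset.sum_ite_eq', Finset.mem_univ, if_true]
    calc t j * α + t i0 * β = α * t j + β * t i0 := by ring
      _ = 0 := hαβ
  have hsum0 := hkey c hsumv
  have hLHS : ∑ i, p i * normSq (c i) = p j * normSq α + p i0 * normSq β := by
    rw [← Finset.sum_subset (Finset.subset_univ {j, i0})
      (fun k _ hk => by
        simp only [Finset.mem_insert, Finset.mem_singleton, not_or] at hk
        rw [hcother k hk.1 hk.2]
        simp)]
    rw [Finset.sum_pair hne, hcj, hci0]
  have hRHSnn : 0 ≤ ∑ s, q s * normSq ((U *ᵥ c) s) :=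
    Finset.sum_nonneg fun s _ => mul_nonneg (hqnonneg s) (normSq_nonneg _)
  rw [hLHS] at hsum0
  have hlt : p j * normSq α + p i0 * normSq β < 0 := by
    rcases not_and_or.mp hne0 with h | h
    · have hα : 0 < normSq α := normSq_pos.mpr h
      nlinarith [normSq_nonneg β]
    · have hβ : 0 < normSq β := normSq_pos.mpr h
      nlinarith [normSq_nonneg α]
  linarith [hsum0 ▸ hRHSnn]
end

section
/- Let z > 0 and let e be a natural number attained by E, with N_e := #{s : E(s) = e} ≥ 1. Then the eigenspace of H(z) for the eigenvalue z·e has dimension exactly N_e − 1; in particular, when N_e = 1 the number z·e is not an eigenvalue of H(z). -/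
/-- for `z > 0` and an attained energy `e` with `N_e ≥ 1` states of
energy `e`, the eigenspace of `H(z)` for the eigenvalue `z·e` has dimension exactly
`N_e − 1`; in particular if `N_e = 1` then `z·e` is not an eigenvalue of `H(z)`. -/
theorem stmt_3 (N : ℕ) (hN : 1 ≤ N) (E : Fin N → ℕ) (z : ℝ) (hz : 0 < z) (e : ℕ)
    (hNe : 1 ≤ (Finset.univ.filter fun s : Fin N => E s = e).card) :
    Module.finrank ℂ
        ↥(Module.End.eigenspace (Matrix.toLin' (Ham N E z)) ((z * (e : ℝ) : ℝ) : ℂ)) =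
      (Finset.univ.filter fun s : Fin N => E s = e).card - 1 ∧
    ((Finset.univ.filter fun s : Fin N => E s = e).card = 1 →
      ¬ Module.End.HasEigenvalue (Matrix.toLin' (Ham N E z)) ((z * (e : ℝ) : ℝ) : ℂ)) := by
  classical
  set T := Finset.univ.filter fun s : Fin N => E s = e with hT
  obtain ⟨s₀, hs₀⟩ := Finset.card_pos.mp hNe
  have hs₀e : E s₀ = e := (Finset.mem_filter.mp hs₀).2
  have hNne : (N : ℂ) ≠ 0 := by
    exact_mod_cast Nat.cast_ne_zero.mpr (by omega)
  set μ : ℂ := ((z * (e : ℝ) : ℝ) : ℂ) with hμ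
  -- application formula
  have happ : ∀ v : Fin N → ℂ, ∀ s,
      (Matrix.toLin' (Ham N E z)) v s
        = ((z * (E s : ℝ) : ℝ) : ℂ) * v s - (∑ s', v s') / N := by
    intro v s
    simp only [Matrix.toLin'_apply, Matrix.mulVec, dotProduct, Ham,
      sub_mul, ite_mul, zero_mul, one_div, Finset.sum_sub_distrib,
      Finset.sum_ite_eq, Finset.mem_univ, if_true]
    rw [← Finset.mul_sum]; ring
  -- the auxiliary maps
  let ι := {s // s ∈ T}
  let f : (ι → ℂ) →ₗ[ℂ] ℂ :=
    { toFun := fun w => ∑ t, w t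
      map_add' := fun a b => by simp [Finset.sum_add_distrib]
      map_smul' := fun c a => by simp [Finset.mul_sum] }
  let ext : (ι → ℂ) →ₗ[ℂ] (Fin N → ℂ) :=
    { toFun := fun w s => if h : s ∈ T then w ⟨s, h⟩ else 0
      map_add' := fun a b => by funext s; by_cases h : s ∈ T <;> simp [h]
      map_smul' := fun c a => by funext s; by_cases h : s ∈ T <;> simp [h] }
  have hinj : Function.Injective ext := by
    intro a b hab
    funext t
    have := congrFun hab t.1
    simpa [ext, t.2] using this
  -- the eigenspace equals the image under ext of ker f
  have hES : Module.End.eigenspace (Matrix.toLin' (Ham N E z)) μ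
      = Submodule.map ext (LinearMap.ker f) := by
    ext v
    rw [Module.End.mem_eigenspace_iff]
    constructor
    · intro h
      have h' : ∀ s, ((z * (E s : ℝ) : ℝ) : ℂ) * v s - (∑ s', v s') / N = μ * v s := by
        intro s
        have := congrFun h s
        rw [happ] at this
        simpa using this
      have hS : (∑ s', v s') = 0 := by
        have := h' s₀
        rw [hs₀e] at this
        have h0 : (∑ s', v s') / N = 0 := by linear_combination -this
        field_simp at h0
        simpa using h0
      have hvz : ∀ s, s ∉ T → v s = 0 := by
        intro s hs
        have hEse : E s ≠ e := by
          intro hh; exact hs (Finset.mem_filter.mpr ⟨Finset.mem_univ s, hh⟩)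
        have := h' s
        rw [hS] at this
        have key : (((z * (E s : ℝ) : ℝ) : ℂ) - μ) * v s = 0 := by
          rw [sub_mul]; rw [hμ]; linear_combination this
        rcases mul_eq_zero.mp key with hc | hv
        · exfalso
          apply hEse
          rw [hμ] at hc
          have hc' : (z : ℂ) * ((E s : ℕ) : ℂ) = (z : ℂ) * ((e : ℕ) : ℂ) := by
            push_cast at hc ⊢
            linear_combination hc
          have hz' : (z : ℂ) ≠ 0 := by exact_mod_cast hz.ne'
          exact_mod_cast mul_left_cancel₀ hz' hc'
        · exact hv
      refine ⟨fun t => v t.1, ?_, ?_⟩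
      · show (∑ t : ι, v t.1) = 0
        have h1 : (∑ t : ι, v t.1) = ∑ s ∈ T, v s := Finset.sum_coe_sort T v
        have h2 : (∑ s ∈ T, v s) = ∑ s', v s' :=
          Finset.sum_subset (Finset.subset_univ T) (fun s _ hs => hvz s hs)
        rw [h1, h2, hS]
      · funext s
        show (if h : s ∈ T then v (⟨s, h⟩ : ι).1 else 0) = v s
        by_cases h : s ∈ T
        · rw [dif_pos h]
        · rw [dif_neg h, hvz s h]
    · rintro ⟨w, hw, rfl⟩
      have hwsum : (∑ t : ι, w t) = 0 := hw
      have hS : (∑ s', (ext w) s') = 0 := by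
        have : (∑ s', (ext w) s') = ∑ s ∈ T, (ext w) s :=
          (Finset.sum_subset (Finset.subset_univ T) (fun s _ hs => by simp [ext, hs])).symm
        rw [this, ← Finset.sum_coe_sort T (ext w)]
        calc (∑ t : ι, (ext w) t.1) = ∑ t : ι, w t := by
              refine Finset.sum_congr rfl fun t _ => ?_
              simp [ext, t.2]
          _ = 0 := hwsum
      funext s
      rw [happ, hS]
      simp only [Pi.smul_apply, smul_eq_mul, hμ]
      by_cases h : s ∈ T
      · have hEs : E s = e := (Finset.mem_filter.mp h).2
        rw [hEs]; ring
      · have h0 : (ext w) s = 0 := by simp [ext, h]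
        rw [h0]; ring
  -- dimension of ker f
  have hsurj : Function.Surjective f := by
    intro c
    refine ⟨Pi.single ⟨s₀, hs₀⟩ c, ?_⟩
    show (∑ t : ι, Pi.single (⟨s₀, hs₀⟩ : ι) c t) = c
    rw [Finset.sum_pi_single']; simp
  have hrange : LinearMap.range f = ⊤ := LinearMap.range_eq_top.mpr hsurj
  have hrn := LinearMap.finrank_range_add_finrank_ker f
  rw [hrange, finrank_top] at hrn
  have hpi : Module.finrank ℂ (ι → ℂ) = T.card := by
    rw [Module.finrank_pi]; exact Fintype.card_coe T
  have hCfin : Module.finrank ℂ ℂ = 1 := Module.finrank_self ℂ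
  have hker : Module.finrank ℂ (LinearMap.ker f) = T.card - 1 := by
    rw [hpi, hCfin] at hrn; omega
  have hdim : Module.finrank ℂ
      ↥(Module.End.eigenspace (Matrix.toLin' (Ham N E z)) μ) = T.card - 1 := by
    rw [hES, ← hker]
    exact ((Submodule.equivMapOfInjective ext hinj (LinearMap.ker f)).finrank_eq).symm
  refine ⟨hdim, fun hcard => ?_⟩
  intro hev
  have h0 : Module.finrank ℂ
      ↥(Module.End.eigenspace (Matrix.toLin' (Ham N E z)) μ) = 0 := by
    rw [hdim, hcard]
  have hbot : Module.End.eigenspace (Matrix.toLin' (Ham N E z)) μ = ⊥ :=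
    Submodule.finrank_eq_zero.mp h0
  exact hev hbot
end

section
/- Let z > 0 and let m' be the number of distinct values attained by E. Then H(z) has exactly m' eigenvalues λ with λ ≠ z·E(s) for all s, each of them simple, and the corresponding eigenvectors form an orthogonal basis of the m'-dimensional subspace A of vectors that are constant on the level sets of E. -/
noncomputable def levelSubspace (N : ℕ) (E : Fin N → ℕ) : Submodule ℂ (Fin N → ℂ) where
  carrier := {v | ∀ s s' : Fin N, E s = E s' → v s = v s'}
  add_mem' := by
    intro a b ha hb s s' h
    simp only [Pi.add_apply, ha s s' h, hb s s' h]
  zero_mem' := by intro s s' _; rfl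
  smul_mem' := by
    intro c a ha s s' h
    simp only [Pi.smul_apply, ha s s' h]

open scoped Matrix

section Aux

variable {N : ℕ} {E : Fin N → ℕ} {z : ℝ}

lemma mulVec_Ham (w : Fin N → ℂ) (s : Fin N) :
    (Ham N E z).mulVec w s = ((z * (E s : ℝ) : ℝ) : ℂ) * w s - (∑ t, w t) / N := by
  simp only [Ham, Matrix.mulVec, dotProduct, sub_mul, Finset.sum_sub_distrib,
    ite_mul, zero_mul, Finset.sum_ite_eq, Finset.mem_univ, if_true, Finset.sum_div]
  congr 1
  exact Finset.sum_congr rfl fun t _ => by ring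

lemma ham_eig_iff (w : Fin N → ℂ) (lam : ℂ) :
    (Ham N E z).mulVec w = lam • w ↔
      ∀ s, (((z * (E s : ℝ) : ℝ) : ℂ) - lam) * w s = (∑ t, w t) / N := by
  rw [funext_iff]
  apply forall_congr'
  intro s
  rw [mulVec_Ham, Pi.smul_apply, smul_eq_mul]
  constructor <;> intro h <;> linear_combination h

lemma ham_eig_structure {w : Fin N → ℂ} {lam : ℂ}
    (hlam : ∀ s, lam ≠ ((z * (E s : ℝ) : ℝ) : ℂ))
    (h : (Ham N E z).mulVec w = lam • w) (s : Fin N) :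
    w s = ((∑ t, w t) / N) * (((z * (E s : ℝ) : ℝ) : ℂ) - lam)⁻¹ := by
  have h1 := (ham_eig_iff w lam).mp h s
  have hd : (((z * (E s : ℝ) : ℝ) : ℂ) - lam) ≠ 0 :=
    sub_ne_zero.mpr fun he => hlam s he.symm
  rw [eq_mul_inv_iff_mul_eq₀ hd]
  linear_combination h1

lemma ham_sum_ne_zero {w : Fin N → ℂ} {lam : ℂ}
    (hlam : ∀ s, lam ≠ ((z * (E s : ℝ) : ℝ) : ℂ))
    (h : (Ham N E z).mulVec w = lam • w) (hw : w ≠ 0) :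
    (∑ t, w t) ≠ 0 := by
  intro hc
  apply hw
  funext s
  rw [ham_eig_structure hlam h s, hc]
  simp

lemma ham_mem_level {w : Fin N → ℂ} {lam : ℂ}
    (hlam : ∀ s, lam ≠ ((z * (E s : ℝ) : ℝ) : ℂ))
    (h : (Ham N E z).mulVec w = lam • w) :
    w ∈ levelSubspace N E := by
  intro s s' hss
  rw [ham_eig_structure hlam h s, ham_eig_structure hlam h s', hss]

lemma ham_avoid (hz : 0 < z) {w : Fin N → ℂ} (hw : w ≠ 0)
    (hwA : w ∈ levelSubspace N E) {lam : ℝ}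
    (h : (Ham N E z).mulVec w = (lam : ℂ) • w) (s₀ : Fin N) :
    lam ≠ z * (E s₀ : ℝ) := by
  intro hlam
  have hiff := (ham_eig_iff w (lam : ℂ)).mp h
  have hc : (∑ t, w t) / (N : ℂ) = 0 := by
    have h0 := hiff s₀
    rw [← hlam] at h0
    simpa using h0.symm
  have hoff : ∀ s, E s ≠ E s₀ → w s = 0 := by
    intro s hE
    have hd : (((z * (E s : ℝ) : ℝ) : ℂ) - (lam : ℂ)) ≠ 0 := by
      rw [sub_ne_zero]
      intro he
      have : z * (E s : ℝ) = lam := by exact_mod_cast he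
      rw [hlam] at this
      exact hE (Nat.cast_injective (mul_left_cancel₀ (ne_of_gt hz) this))
    have h0 := hiff s
    rw [hc] at h0
    rcases mul_eq_zero.mp h0 with h' | h'
    · exact absurd h' hd
    · exact h'
  have hlevel : ∀ s, E s = E s₀ → w s = 0 := by
    intro s hs
    have hsum : (∑ t, w t) = 0 := by
      by_contra hne
      have hNne : (N : ℂ) ≠ 0 := Nat.cast_ne_zero.mpr (Nat.pos_of_ne_zero (by
        rintro rfl; exact absurd s₀.2 (by omega))).ne'
      exact hne (by field_simp at hc; simpa using hc)
    have hsplit := Finset.sum_filter_add_sum_filter_not Finset.univ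
      (fun t => E t = E s₀) w
    have hzero2 : ∑ t ∈ Finset.univ.filter (fun t => ¬ E t = E s₀), w t = 0 :=
      Finset.sum_eq_zero fun t ht => hoff t (Finset.mem_filter.mp ht).2
    have hconst : ∑ t ∈ Finset.univ.filter (fun t => E t = E s₀), w t =
        ((Finset.univ.filter (fun t => E t = E s₀)).card : ℂ) * w s₀ := by
      rw [Finset.sum_congr rfl (fun t ht => hwA t s₀ (Finset.mem_filter.mp ht).2)]
      simp [Finset.sum_const, mul_comm]
    have hcard : (Finset.univ.filter (fun t => E t = E s₀)).card ≠ 0 := by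
      refine Finset.card_ne_zero_of_mem (a := s₀) ?_
      simp
    have : ((Finset.univ.filter (fun t => E t = E s₀)).card : ℂ) * w s₀ = 0 := by
      rw [← hconst]
      have := hsplit
      rw [hzero2, add_zero] at this
      rw [this, hsum]
    have hw0 : w s₀ = 0 := by
      rcases mul_eq_zero.mp this with h' | h'
      · exact absurd h' (Nat.cast_ne_zero.mpr hcard)
      · exact h'
    rw [hwA s s₀ hs, hw0]
  apply hw
  funext s
  by_cases hE : E s = E s₀
  · exact hlevel s hE
  · exact hoff s hE

lemma ham_isHermitian : (Ham N E z).IsHermitian := by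
  ext s t
  simp only [Matrix.conjTranspose_apply, Ham]
  by_cases h : s = t
  · subst h
    simp [map_sub]
  · rw [if_neg (Ne.symm h), if_neg h]
    simp [map_sub]

lemma real_cast_ne {lm : ℝ} (hlm : ∀ s : Fin N, lm ≠ z * (E s : ℝ)) :
    ∀ s, (lm : ℂ) ≠ ((z * (E s : ℝ) : ℝ) : ℂ) :=
  fun s h => hlm s (by exact_mod_cast h)

lemma ham_eigenspace_eq (hN : 1 ≤ N) {lm : ℝ} (hlm : ∀ s : Fin N, lm ≠ z * (E s : ℝ))
    {w : Fin N → ℂ} (hw0 : w ≠ 0) (hw : (Ham N E z).mulVec w = (lm : ℂ) • w) :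
    Module.End.eigenspace (Matrix.toLin' (Ham N E z)) ((lm : ℝ) : ℂ) =
      Submodule.span ℂ {w} := by
  have hlm' := real_cast_ne (E := E) hlm
  have hcw : (∑ t, w t) ≠ 0 := ham_sum_ne_zero hlm' hw hw0
  have hNc : (N : ℂ) ≠ 0 := Nat.cast_ne_zero.mpr (by omega)
  apply le_antisymm
  · intro x hx
    have hx' : (Ham N E z).mulVec x = (lm : ℂ) • x := by
      have := Module.End.mem_eigenspace_iff.mp hx
      rwa [Matrix.toLin'_apply] at this
    refine Submodule.mem_span_singleton.mpr ⟨(∑ t, x t) / (∑ t, w t), ?_⟩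
    funext s
    rw [Pi.smul_apply, smul_eq_mul, ham_eig_structure hlm' hx' s,
      ham_eig_structure hlm' hw s]
    field_simp
  · rw [Submodule.span_singleton_le_iff_mem]
    exact Module.End.mem_eigenspace_iff.mpr (by rw [Matrix.toLin'_apply]; exact hw)

lemma finrank_levelSubspace (N : ℕ) (E : Fin N → ℕ) :
    Module.finrank ℂ (levelSubspace N E) = (Finset.univ.image E).card := by
  classical
  set F := Finset.univ.image E with hF
  have hmem : ∀ s : Fin N, E s ∈ F := fun s => Finset.mem_image_of_mem E (Finset.mem_univ s)
  let Φ : ({x // x ∈ F} → ℂ) →ₗ[ℂ] (Fin N → ℂ) :=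
    { toFun := fun c s => c ⟨E s, hmem s⟩
      map_add' := fun _ _ => rfl
      map_smul' := fun _ _ => rfl }
  have hinj : Function.Injective Φ := by
    intro c d h
    funext ν
    obtain ⟨s, -, hs⟩ := Finset.mem_image.mp ν.2
    have h2 := congrFun h s
    have hν : (⟨E s, hmem s⟩ : {x // x ∈ F}) = ν := Subtype.ext hs
    rw [← hν]
    exact h2
  have hrange : LinearMap.range Φ = levelSubspace N E := by
    ext v
    constructor
    · rintro ⟨c, rfl⟩ s s' h
      show c ⟨E s, hmem s⟩ = c ⟨E s', hmem s'⟩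
      congr 1
      exact Subtype.ext h
    · intro hv
      refine ⟨fun ν => v (Finset.mem_image.mp ν.2).choose, ?_⟩
      funext s
      have hspec := (Finset.mem_image.mp (hmem s)).choose_spec
      exact hv _ s hspec.2
  have e1 : Module.finrank ℂ ({x // x ∈ F} → ℂ) = Module.finrank ℂ (LinearMap.range Φ) :=
    (LinearEquiv.ofInjective Φ hinj).finrank_eq
  rw [← hrange, ← e1, Module.finrank_fintype_fun_eq_card, Fintype.card_coe]


section Pmat

variable {N : ℕ} {E : Fin N → ℕ}

/-- multiplicity of a level -/
noncomputable def multE (N : ℕ) (E : Fin N → ℕ) (m : ℕ) : ℕ :=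
  (Finset.univ.filter fun t => E t = m).card

lemma memF (s : Fin N) : E s ∈ Finset.univ.image E :=
  Finset.mem_image_of_mem E (Finset.mem_univ s)

lemma multE_pos (s : Fin N) : 0 < multE N E (E s) :=
  Finset.card_pos.mpr ⟨s, by simp [multE]⟩

lemma multE_pos' (ν : {x // x ∈ Finset.univ.image E}) : 0 < multE N E ν.1 := by
  obtain ⟨s, -, hs⟩ := Finset.mem_image.mp ν.2
  rw [← hs]
  exact multE_pos s

/-- The isometry matrix whose columns are normalized level indicators. -/
noncomputable def Pmat (N : ℕ) (E : Fin N → ℕ) :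
    Matrix (Fin N) {x // x ∈ Finset.univ.image E} ℂ :=
  fun s ν => if E s = ν.1 then (((Real.sqrt (multE N E ν.1))⁻¹ : ℝ) : ℂ) else 0

lemma rfac_sq (m : ℕ) :
    ((((Real.sqrt (multE N E m))⁻¹ : ℝ) : ℂ)) * (((Real.sqrt (multE N E m))⁻¹ : ℝ) : ℂ)
      = (((multE N E m : ℝ))⁻¹ : ℂ) := by
  have h : ((Real.sqrt (multE N E m))⁻¹ : ℝ) * ((Real.sqrt (multE N E m))⁻¹ : ℝ)
      = ((multE N E m : ℝ))⁻¹ := by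
    rw [← mul_inv, Real.mul_self_sqrt (by positivity)]
  rw [← Complex.ofReal_mul, h]
  norm_cast

lemma Pmat_mulVec (x : {x // x ∈ Finset.univ.image E} → ℂ) (s : Fin N) :
    (Pmat N E *ᵥ x) s
      = (((Real.sqrt (multE N E (E s)))⁻¹ : ℝ) : ℂ) * x ⟨E s, memF s⟩ := by
  simp only [Pmat, Matrix.mulVec, dotProduct, ite_mul, zero_mul]
  rw [Finset.sum_eq_single (⟨E s, memF s⟩ : {x // x ∈ Finset.univ.image E})]
  · simp
  · intro ν _ hν
    rw [if_neg fun h => hν (Subtype.ext h.symm)]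
  · intro h
    exact absurd (Finset.mem_univ _) h

lemma PmatH_mulVec (w : Fin N → ℂ) (ν : {x // x ∈ Finset.univ.image E}) :
    ((Pmat N E)ᴴ *ᵥ w) ν
      = (((Real.sqrt (multE N E ν.1))⁻¹ : ℝ) : ℂ)
        * ∑ t ∈ Finset.univ.filter (fun t => E t = ν.1), w t := by
  simp only [Matrix.mulVec, dotProduct, Matrix.conjTranspose_apply, Pmat]
  have h1 : ∀ t : Fin N,
      star (if E t = ν.1 then (((Real.sqrt (multE N E ν.1))⁻¹ : ℝ) : ℂ) else 0) * w t
      = if E t = ν.1 then (((Real.sqrt (multE N E ν.1))⁻¹ : ℝ) : ℂ) * w t else 0 := by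
    intro t
    split <;> simp [Complex.conj_ofReal]
  rw [Finset.sum_congr rfl fun t _ => h1 t, ← Finset.sum_filter, Finset.mul_sum]

lemma PtP_mulVec (x : {x // x ∈ Finset.univ.image E} → ℂ) :
    (Pmat N E)ᴴ *ᵥ (Pmat N E *ᵥ x) = x := by
  funext ν
  rw [PmatH_mulVec]
  have h1 : ∀ t ∈ Finset.univ.filter (fun t => E t = ν.1),
      (Pmat N E *ᵥ x) t = (((Real.sqrt (multE N E ν.1))⁻¹ : ℝ) : ℂ) * x ν := by
    intro t ht
    have hEt : E t = ν.1 := (Finset.mem_filter.mp ht).2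
    rw [Pmat_mulVec, show (⟨E t, memF t⟩ : {x // x ∈ Finset.univ.image E}) = ν from
      Subtype.ext hEt, hEt]
  rw [Finset.sum_congr rfl h1, Finset.sum_const]
  have hcard : (Finset.univ.filter (fun t => E t = ν.1)).card = multE N E ν.1 := rfl
  rw [hcard, nsmul_eq_mul]
  have hm : ((multE N E ν.1 : ℕ) : ℂ) ≠ 0 := Nat.cast_ne_zero.mpr (multE_pos' ν).ne'
  have h2 : (((Real.sqrt (multE N E ν.1))⁻¹ : ℝ) : ℂ) * (((Real.sqrt (multE N E ν.1))⁻¹ : ℝ) : ℂ)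
      * ((multE N E ν.1 : ℕ) : ℂ) = 1 := by
    rw [rfac_sq]
    push_cast
    exact inv_mul_cancel₀ hm
  linear_combination (x ν) * h2

lemma PPt_mulVec {w : Fin N → ℂ} (hw : w ∈ levelSubspace N E) :
    Pmat N E *ᵥ ((Pmat N E)ᴴ *ᵥ w) = w := by
  funext s
  rw [Pmat_mulVec, PmatH_mulVec]
  have h1 : ∀ t ∈ Finset.univ.filter (fun t => E t = E s), w t = w s := by
    intro t ht
    exact hw t s (Finset.mem_filter.mp ht).2
  show (((Real.sqrt (multE N E (E s)))⁻¹ : ℝ) : ℂ)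
      * ((((Real.sqrt (multE N E (E s)))⁻¹ : ℝ) : ℂ)
        * ∑ t ∈ Finset.univ.filter (fun t => E t = E s), w t) = w s
  rw [Finset.sum_congr rfl h1, Finset.sum_const]
  have hcard : (Finset.univ.filter (fun t => E t = E s)).card = multE N E (E s) := rfl
  rw [hcard, nsmul_eq_mul]
  have hm : ((multE N E (E s) : ℕ) : ℂ) ≠ 0 := Nat.cast_ne_zero.mpr (multE_pos s).ne'
  have h2 : (((Real.sqrt (multE N E (E s)))⁻¹ : ℝ) : ℂ)
      * (((Real.sqrt (multE N E (E s)))⁻¹ : ℝ) : ℂ) * ((multE N E (E s) : ℕ) : ℂ) = 1 := by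
    rw [rfac_sq]
    push_cast
    exact inv_mul_cancel₀ hm
  linear_combination (w s) * h2

lemma Pmat_dot (x y : {x // x ∈ Finset.univ.image E} → ℂ) :
    star (Pmat N E *ᵥ x) ⬝ᵥ (Pmat N E *ᵥ y) = star x ⬝ᵥ y := by
  rw [Matrix.star_mulVec, ← Matrix.dotProduct_mulVec, PtP_mulVec]

lemma Pmat_mem_level (x : {x // x ∈ Finset.univ.image E} → ℂ) :
    Pmat N E *ᵥ x ∈ levelSubspace N E := by
  intro s s' h
  rw [Pmat_mulVec, Pmat_mulVec,
    show (⟨E s, memF s⟩ : {x // x ∈ Finset.univ.image E}) = ⟨E s', memF s'⟩ from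
      Subtype.ext h, h]

lemma ham_maps_level {z : ℝ} {w : Fin N → ℂ} (hw : w ∈ levelSubspace N E) :
    (Ham N E z).mulVec w ∈ levelSubspace N E := by
  intro s s' h
  rw [mulVec_Ham, mulVec_Ham, hw s s' h, h]

lemma intertwine (z : ℝ) (c : {x // x ∈ Finset.univ.image E} → ℂ) :
    (Ham N E z) *ᵥ (Pmat N E *ᵥ c)
      = Pmat N E *ᵥ (((Pmat N E)ᴴ * Ham N E z * Pmat N E) *ᵥ c) := by
  rw [← Matrix.mulVec_mulVec, ← Matrix.mulVec_mulVec]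
  exact (PPt_mulVec (ham_maps_level (Pmat_mem_level c))).symm

lemma smallHerm (z : ℝ) : ((Pmat N E)ᴴ * Ham N E z * Pmat N E).IsHermitian := by
  have h := ham_isHermitian (N := N) (E := E) (z := z)
  unfold Matrix.IsHermitian at h ⊢
  rw [Matrix.conjTranspose_mul, Matrix.conjTranspose_mul, Matrix.conjTranspose_conjTranspose,
    h, Matrix.mul_assoc]

end Pmat

end Aux



/-- for `z > 0`, with `m'` the number of distinct values of `E`, the matrix
`H(z)` has exactly `m'` eigenvalues avoiding all the points `z·E(s)`, each simple, and the
corresponding eigenvectors form an orthogonal basis of the `m'`-dimensional subspace `A`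
of vectors constant on the level sets of `E`. -/
theorem stmt_7 (N : ℕ) (hN : 1 ≤ N) (E : Fin N → ℕ) (z : ℝ) (hz : 0 < z) :
    Module.finrank ℂ ↥(levelSubspace N E) = (Finset.univ.image E).card ∧
    ∃ lam : Fin (Finset.univ.image E).card → ℝ, Function.Injective lam ∧
      (∀ j, ∀ s : Fin N, lam j ≠ z * (E s : ℝ)) ∧
      ∃ v : Fin (Finset.univ.image E).card → (Fin N → ℂ),
        (∀ j, v j ≠ 0 ∧ (Ham N E z).mulVec (v j) = (lam j : ℂ) • v j ∧
          Module.finrank ℂ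
            ↥(Module.End.eigenspace (Matrix.toLin' (Ham N E z)) ((lam j : ℝ) : ℂ)) = 1) ∧
        (∀ j k, j ≠ k → ∑ s : Fin N, (starRingEnd ℂ) (v j s) * v k s = 0) ∧
        Submodule.span ℂ (Set.range v) = levelSubspace N E ∧
        (∀ μ : ℝ, (∀ s : Fin N, μ ≠ z * (E s : ℝ)) →
          (∃ w : Fin N → ℂ, w ≠ 0 ∧ (Ham N E z).mulVec w = (μ : ℂ) • w) →
          ∃ j, lam j = μ) := by
  classical
  have hM' := smallHerm (N := N) (E := E) (z := z)
  set M' := (Pmat N E)ᴴ * Ham N E z * Pmat N E with hM'def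
  let e : Fin (Finset.univ.image E).card ≃ {x // x ∈ Finset.univ.image E} :=
    (Fintype.equivFinOfCardEq (Fintype.card_coe (Finset.univ.image E))).symm
  let b := hM'.eigenvectorBasis
  let c : Fin (Finset.univ.image E).card → ({x // x ∈ Finset.univ.image E} → ℂ) :=
    fun j ν => b (e j) ν
  let lam : Fin (Finset.univ.image E).card → ℝ := fun j => hM'.eigenvalues (e j)
  let v : Fin (Finset.univ.image E).card → (Fin N → ℂ) := fun j => Pmat N E *ᵥ c j
  have hc_eig : ∀ j, M' *ᵥ c j = lam j • c j := fun j => hM'.mulVec_eigenvectorBasis (e j)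
  have hc_ne : ∀ j, c j ≠ 0 := by
    intro j h
    have : b (e j) = 0 := by
      ext ν
      simpa [c] using congrFun h ν
    exact b.orthonormal.ne_zero (e j) this
  have hc_dot : ∀ j k, star (c j) ⬝ᵥ c k = inner (𝕜 := ℂ) (b (e j)) (b (e k)) := by
    intro j k
    rw [PiLp.inner_apply]
    simp only [RCLike.inner_apply, dotProduct, Pi.star_apply]
    exact Finset.sum_congr rfl fun x _ => mul_comm _ _
  have hv_eig : ∀ j, (Ham N E z).mulVec (v j) = ((lam j : ℝ) : ℂ) • v j := by
    intro j
    show (Ham N E z) *ᵥ (Pmat N E *ᵥ c j) = ((lam j : ℝ) : ℂ) • (Pmat N E *ᵥ c j)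
    rw [intertwine, hc_eig j, Matrix.mulVec_smul]
    funext s
    simp [Complex.real_smul]
  have hv_mem : ∀ j, v j ∈ levelSubspace N E := fun j => Pmat_mem_level (c j)
  have hv_ne : ∀ j, v j ≠ 0 := by
    intro j h
    apply hc_ne j
    have := PtP_mulVec (E := E) (c j)
    rw [show Pmat N E *ᵥ c j = v j from rfl, h] at this
    rw [← this]
    simp
  have havoid : ∀ j s, lam j ≠ z * (E s : ℝ) :=
    fun j s => ham_avoid hz (hv_ne j) (hv_mem j) (hv_eig j) s
  have heigspan : ∀ j, Module.End.eigenspace (Matrix.toLin' (Ham N E z))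
      ((lam j : ℝ) : ℂ) = Submodule.span ℂ {v j} :=
    fun j => ham_eigenspace_eq hN (havoid j) (hv_ne j) (hv_eig j)
  have hortho : ∀ j k, j ≠ k → ∑ s : Fin N, (starRingEnd ℂ) (v j s) * v k s = 0 := by
    intro j k hjk
    have h1 : star (v j) ⬝ᵥ v k = 0 := by
      rw [show v j = Pmat N E *ᵥ c j from rfl, show v k = Pmat N E *ᵥ c k from rfl,
        Pmat_dot, hc_dot]
      exact b.orthonormal.2 (fun h => hjk (e.injective h))
    simpa [dotProduct, Pi.star_apply] using h1
  have hinjlam : Function.Injective lam := by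
    intro j k hjk
    by_contra hne
    have hk : v k ∈ Module.End.eigenspace (Matrix.toLin' (Ham N E z)) ((lam j : ℝ) : ℂ) := by
      refine Module.End.mem_eigenspace_iff.mpr ?_
      rw [Matrix.toLin'_apply, hjk]
      exact hv_eig k
    rw [heigspan j] at hk
    obtain ⟨a, ha⟩ := Submodule.mem_span_singleton.mp hk
    have ha' : a ≠ 0 := by
      intro h
      apply hv_ne k
      rw [← ha, h, zero_smul]
    have hself : star (v j) ⬝ᵥ v j ≠ 0 := by
      rw [show v j = Pmat N E *ᵥ c j from rfl, Pmat_dot, hc_dot]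
      exact inner_self_ne_zero.mpr (b.orthonormal.ne_zero (e j))
    have h0 := hortho j k hne
    rw [← ha] at h0
    apply hself
    have : ∑ s : Fin N, (starRingEnd ℂ) (v j s) * (a • v j) s
        = a * ∑ s : Fin N, (starRingEnd ℂ) (v j s) * v j s := by
      rw [Finset.mul_sum]
      exact Finset.sum_congr rfl fun s _ => by simp [Pi.smul_apply, smul_eq_mul]; ring
    rw [this] at h0
    rcases mul_eq_zero.mp h0 with h' | h'
    · exact absurd h' ha'
    · exact h'
  have hinjlamC : Function.Injective fun j => ((lam j : ℝ) : ℂ) := by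
    intro j k h
    have h' : ((lam j : ℝ) : ℂ) = ((lam k : ℝ) : ℂ) := h
    exact hinjlam (by exact_mod_cast h')
  have hli : LinearIndependent ℂ v := by
    apply Module.End.eigenvectors_linearIndependent' (Matrix.toLin' (Ham N E z))
      (fun j => ((lam j : ℝ) : ℂ)) hinjlamC v
    intro j
    constructor
    · exact Module.End.mem_eigenspace_iff.mpr (by rw [Matrix.toLin'_apply]; exact hv_eig j)
    · exact hv_ne j
  have hspan : Submodule.span ℂ (Set.range v) = levelSubspace N E := by
    apply Submodule.eq_of_le_of_finrank_le
    · rw [Submodule.span_le]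
      rintro x ⟨j, rfl⟩
      exact hv_mem j
    · rw [finrank_levelSubspace, finrank_span_eq_card hli, Fintype.card_fin]
  refine ⟨finrank_levelSubspace N E, lam, hinjlam, havoid, v, ?_, hortho, hspan, ?_⟩
  · intro j
    refine ⟨hv_ne j, hv_eig j, ?_⟩
    rw [heigspan j]
    exact finrank_span_singleton (hv_ne j)
  · rintro μ hμ ⟨w, hw0, hweq⟩
    by_contra hcon
    push_neg at hcon
    have hwmem : w ∈ levelSubspace N E := ham_mem_level (real_cast_ne hμ) hweq
    let V : Option (Fin (Finset.univ.image E).card) → (Fin N → ℂ) :=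
      fun o => o.elim w v
    let L : Option (Fin (Finset.univ.image E).card) → ℂ :=
      fun o => o.elim ((μ : ℝ) : ℂ) (fun j => ((lam j : ℝ) : ℂ))
    have hLinj : Function.Injective L := by
      rintro (_ | j) (_ | k) h
      · rfl
      · have h' : ((μ : ℝ) : ℂ) = ((lam k : ℝ) : ℂ) := h
        exact absurd (by exact_mod_cast h'.symm : lam k = μ) (hcon k)
      · have h' : ((lam j : ℝ) : ℂ) = ((μ : ℝ) : ℂ) := h
        exact absurd (by exact_mod_cast h' : lam j = μ) (hcon j)
      · have h' : ((lam j : ℝ) : ℂ) = ((lam k : ℝ) : ℂ) := h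
        exact congrArg some (hinjlamC h')
    have hEV : ∀ o, Module.End.HasEigenvector (Matrix.toLin' (Ham N E z)) (L o) (V o) := by
      rintro (_ | j)
      · exact ⟨Module.End.mem_eigenspace_iff.mpr (by rw [Matrix.toLin'_apply]; exact hweq), hw0⟩
      · exact ⟨Module.End.mem_eigenspace_iff.mpr
          (by rw [Matrix.toLin'_apply]; exact hv_eig j), hv_ne j⟩
    have hli2 : LinearIndependent ℂ V :=
      Module.End.eigenvectors_linearIndependent' (Matrix.toLin' (Ham N E z)) L hLinj V hEV
    have hVmem : ∀ o, V o ∈ levelSubspace N E := by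
      rintro (_ | j)
      · exact hwmem
      · exact hv_mem j
    let V' : Option (Fin (Finset.univ.image E).card) → ↥(levelSubspace N E) :=
      fun o => ⟨V o, hVmem o⟩
    have hli3 : LinearIndependent ℂ V' :=
      LinearIndependent.of_comp (levelSubspace N E).subtype hli2
    have hcard := hli3.fintype_card_le_finrank
    rw [finrank_levelSubspace, Fintype.card_option, Fintype.card_fin] at hcard
    omega
end

section
/- Let T ≥ 0, let z : [0,T] → ℝ be continuous, and let ψ : [0,T] → ℂ^N be differentiable with ψ(0) = φ and satisfying the Schrödinger equation i·ψ'(t) = H(z(t))·ψ(t) for all t ∈ [0,T]. Then for every t ∈ [0,T], ψ(t) is constant on the level sets of E: E(s) = E(s') implies ψ(t)(s) = ψ(t)(s'). -/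
/-- if `ψ` solves the Schrödinger equation `i·ψ'(t) = H(z(t))·ψ(t)` on
`[0,T]` with continuous schedule `z` and initial condition the equal superposition state
`φ(s) = 1/√N`, then `ψ(t)` stays constant on the level sets of `E` for all `t ∈ [0,T]`. -/
theorem stmt_8 (N : ℕ) (hN : 1 ≤ N) (E : Fin N → ℕ) (T : ℝ) (hT : 0 ≤ T)
    (z : ℝ → ℝ) (hz : ContinuousOn z (Set.Icc 0 T))
    (ψ : ℝ → (Fin N → ℂ))
    (hψ0 : ψ 0 = fun _ : Fin N => ((1 / Real.sqrt N : ℝ) : ℂ))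
    (hSchr : ∀ t ∈ Set.Icc (0 : ℝ) T,
      HasDerivWithinAt ψ (-Complex.I • (Ham N E (z t)).mulVec (ψ t)) (Set.Icc 0 T) t) :
    ∀ t ∈ Set.Icc (0 : ℝ) T, ∀ s s' : Fin N, E s = E s' → ψ t s = ψ t s' := by
  intro t ht s s' hE
  -- bound on |z| over the interval
  obtain ⟨C, hC⟩ : ∃ C : ℝ, ∀ u ∈ Set.Icc (0:ℝ) T, |z u| ≤ C := by
    obtain ⟨C, hC⟩ := (isCompact_Icc.image_of_continuousOn hz).isBounded.subset_closedBall 0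
    exact ⟨C, fun u hu => by
      have := hC (Set.mem_image_of_mem z hu)
      simpa [Real.dist_eq] using this⟩
  have hC0 : 0 ≤ C := le_trans (abs_nonneg _) (hC 0 ⟨le_refl _, hT⟩)
  -- the coefficient function
  set c : ℝ → ℂ := fun u => -Complex.I * ((z u : ℂ) * (E s : ℂ)) with hc
  have hcbound : ∀ u ∈ Set.Icc (0:ℝ) T, ‖c u‖ ≤ C * (E s) := by
    intro u hu
    have : ‖c u‖ = |z u| * (E s) := by
      rw [hc]
      rw [norm_mul, norm_neg, Complex.norm_I, one_mul, norm_mul,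
        Complex.norm_real, Real.norm_eq_abs]
      norm_num [Complex.norm_natCast]
    rw [this]
    exact mul_le_mul_of_nonneg_right (hC u hu) (Nat.cast_nonneg _)
  set K : NNReal := Real.toNNReal (C * (E s)) with hK
  -- vector field (autonomous in the time-dependent sense)
  set v : ℝ → ℂ → ℂ := fun u x => c (min (max u 0) T) * x with hv
  have hclamp : ∀ u : ℝ, min (max u 0) T ∈ Set.Icc (0:ℝ) T := by
    intro u
    constructor
    · exact le_min (le_max_right _ _) hT
    · exact min_le_right _ _
  have hlip : ∀ u : ℝ, LipschitzOnWith K (v u) Set.univ := by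
    intro u
    apply LipschitzOnWith.mono _ (Set.subset_univ _)
    apply LipschitzWith.lipschitzOnWith (s := Set.univ)
    apply LipschitzWith.of_dist_le_mul
    intro x y
    simp only [hv, dist_eq_norm, ← mul_sub, norm_mul]
    have h1 : ‖c (min (max u 0) T)‖ ≤ (K : ℝ) := by
      rw [hK, Real.coe_toNNReal _ (by positivity)]
      exact hcbound _ (hclamp u)
    exact mul_le_mul_of_nonneg_right h1 (norm_nonneg _)
  -- the difference function
  set f : ℝ → ℂ := fun u => ψ u s - ψ u s' with hf
  -- derivative of f within Icc 0 T
  have hfderiv : ∀ u ∈ Set.Icc (0:ℝ) T, HasDerivWithinAt f (v u (f u)) (Set.Icc 0 T) u := by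
    intro u hu
    have h := hSchr u hu
    have hs := (hasDerivWithinAt_pi.1 h) s
    have hs' := (hasDerivWithinAt_pi.1 h) s'
    have hd := hs.sub hs'
    convert hd using 1
    case e'_4 => rfl
    case e'_8 => rfl
    have hmin : min (max u 0) T = u := by
      rw [max_eq_left hu.1, min_eq_left hu.2]
    simp only [hv, hf, hmin, Pi.smul_apply, Pi.neg_apply, smul_eq_mul]
    have hmv : ∀ (a : Fin N), (Ham N E (z u)).mulVec (ψ u) a
        = (z u : ℂ) * (E a : ℂ) * ψ u a - (∑ j, ψ u j) / (N : ℂ) := by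
      intro a
      simp only [Ham, Matrix.mulVec, dotProduct, sub_mul, Finset.sum_sub_distrib]
      congr 1
      · rw [Finset.sum_eq_single a]
        · simp [Complex.ofReal_mul]
        · intro b _ hb
          simp [Ne.symm hb]
        · simp
      · rw [Finset.sum_div]
        exact Finset.sum_congr rfl (fun j _ => by ring)
    rw [hmv s, hmv s']
    have hE' : (E s : ℂ) = (E s' : ℂ) := by exact_mod_cast hE
    linear_combination Complex.I * (z u : ℂ) * (ψ u s') * hE'
  have hfcont : ContinuousOn f (Set.Icc 0 T) :=
    fun u hu => (hfderiv u hu).continuousWithinAt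
  -- zero solution
  have hzero : ∀ u ∈ Set.Ico (0:ℝ) T,
      HasDerivWithinAt (fun _ : ℝ => (0:ℂ)) (v u 0) (Set.Ici u) u := by
    intro u hu
    have : v u 0 = 0 := by simp [hv]
    rw [this]
    exact hasDerivWithinAt_const u _ 0
  -- uniqueness via Gronwall
  have huniq : Set.EqOn f (fun _ => (0:ℂ)) (Set.Icc 0 T) := by
    apply ODE_solution_unique_of_mem_Icc_right (v := v) (s := fun _ => Set.univ)
      (K := K) (fun u _ => hlip u) hfcont
    · intro u hu
      have h1 := hfderiv u (Set.mem_Icc_of_Ico hu)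
      exact (h1.mono (Set.Icc_subset_Icc_left hu.1)).mono_of_mem_nhdsWithin
        (Icc_mem_nhdsGE_of_mem ⟨le_refl u, hu.2⟩)
    · exact fun _ _ => Set.mem_univ _
    · exact continuousOn_const
    · intro u hu
      simpa using hzero u hu
    · exact fun _ _ => Set.mem_univ _
    · simp [hf, hψ0]
  have := huniq ht
  simpa [hf, sub_eq_zero] using this
end

section
/- Assume N0 := #{s : E(s) = 0} ≥ 1. Let T ≥ 0, let z : [0,T] → ℝ be continuous, and let ψ : [0,T] → ℂ^N be differentiable with ψ(0) = φ and i·ψ'(t) = H(z(t))·ψ(t) for all t ∈ [0,T]. Let P be the diagonal projection with P_{ss} = 1 if E(s) = 0 and 0 otherwise, and set p := ‖P·ψ(T)‖². If p > 0, then T ≥ √(N/N0) · (p/2) · (1 − √(N0/(N·p)))² / (1 + √p). -/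
lemma ham_apply (N : ℕ) (E : Fin N → ℕ) (z : ℝ) (x : Fin N → ℂ) (s : Fin N) :
    (Ham N E z).mulVec x s = ((z * (E s : ℝ) : ℝ) : ℂ) * x s - (∑ s', x s') / N := by
  simp only [Ham, Matrix.mulVec, dotProduct, sub_mul, Finset.sum_sub_distrib,
    ite_mul, zero_mul, Finset.sum_ite_eq, Finset.mem_univ, if_true]
  rw [Finset.sum_div]
  congr 1
  exact Finset.sum_congr rfl fun s' _ => by ring

lemma normSq_const (N : ℕ) (T : ℝ) (hT : 0 ≤ T) (c : ℝ → Fin N → ℝ) (ψ : ℝ → Fin N → ℂ)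
    (hd : ∀ t ∈ Set.Icc (0:ℝ) T, ∀ s, HasDerivWithinAt (fun u => ψ u s)
      (-Complex.I * (((c t s : ℝ):ℂ) * ψ t s - (∑ s', ψ t s')/(N:ℂ))) (Set.Icc 0 T) t) :
    ∀ t ∈ Set.Icc (0:ℝ) T, ∑ s, Complex.normSq (ψ t s) = ∑ s, Complex.normSq (ψ 0 s) := by
  intro t ht
  set F : ℝ → ℝ := fun u => ∑ s, Complex.normSq (ψ u s) with hF
  have hFd : ∀ u ∈ Set.Icc (0:ℝ) T, HasDerivWithinAt F 0 (Set.Icc 0 T) u := by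
    intro u hu
    set d : Fin N → ℂ := fun s => -Complex.I * (((c u s : ℝ):ℂ) * ψ u s - (∑ s', ψ u s')/(N:ℂ))
      with hdd
    have h3 : ∀ s : Fin N, HasDerivWithinAt
        (fun v => (starRingEnd ℂ (ψ v s) * ψ v s).re)
        ((star (d s) * ψ u s + starRingEnd ℂ (ψ u s) * d s).re) (Set.Icc 0 T) u := by
      intro s
      have h1 := hd u hu s
      have h2 : HasDerivWithinAt (fun v => starRingEnd ℂ (ψ v s) * ψ v s)
          (star (d s) * ψ u s + starRingEnd ℂ (ψ u s) * d s) (Set.Icc 0 T) u :=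
        HasDerivWithinAt.mul h1.star h1
      exact (Complex.reCLM.hasFDerivAt.comp_hasDerivWithinAt u h2)
    have hsum := HasDerivWithinAt.sum (u := Finset.univ)
      (fun s _ => h3 s)
    have hzero : (∑ s : Fin N, (star (d s) * ψ u s + starRingEnd ℂ (ψ u s) * d s).re) = 0 := by
      rw [← Complex.re_sum]
      have key : ∀ s : Fin N, star (d s) * ψ u s + starRingEnd ℂ (ψ u s) * d s =
          Complex.I * (starRingEnd ℂ (ψ u s) * ((∑ s', ψ u s')/(N:ℂ))
            - starRingEnd ℂ ((∑ s', ψ u s')/(N:ℂ)) * ψ u s) := by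
        intro s
        simp only [hdd, star_mul', star_sub, star_neg, Complex.star_def, map_mul, map_sub,
          map_neg, Complex.conj_ofReal, Complex.conj_I, map_div₀, map_sum, map_natCast]
        ring
      rw [Finset.sum_congr rfl (fun s _ => key s)]
      rw [← Finset.mul_sum]
      have : (∑ s : Fin N, (starRingEnd ℂ (ψ u s) * ((∑ s', ψ u s')/(N:ℂ))
          - starRingEnd ℂ ((∑ s', ψ u s')/(N:ℂ)) * ψ u s)) = 0 := by
        rw [Finset.sum_sub_distrib, ← Finset.sum_mul, ← Finset.mul_sum]
        rw [map_div₀, map_sum, map_natCast, ← map_sum]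
        ring
      rw [this, mul_zero, Complex.zero_re]
    have : HasDerivWithinAt (fun v => ∑ s : Fin N, (starRingEnd ℂ (ψ v s) * ψ v s).re)
        0 (Set.Icc 0 T) u := by simpa only [hzero, Finset.sum_fn] using hsum
    have hFeq : F = fun v => ∑ s : Fin N, (starRingEnd ℂ (ψ v s) * ψ v s).re := by
      funext v
      simp [hF, Complex.normSq_apply, Complex.mul_re]
    rw [hFeq]
    exact this
  have hmvt := Convex.norm_image_sub_le_of_norm_hasDerivWithin_le (C := 0)
    (f' := fun _ => 0) hFd (fun u _ => by simp) (convex_Icc 0 T)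
    (Set.left_mem_Icc.2 hT) ht
  have : F t = F 0 := by rw [← sub_eq_zero, ← norm_le_zero_iff]; simpa using hmvt
  exact this

lemma alg_ineq (a q B : ℝ) (ha0 : 0 < a) (ha1 : a ≤ 1) (hq : 0 < q)
    (hB : |q / a - 1| ≤ B) : (1 / a) * (q ^ 2 / 2) * (1 - a / q) ^ 2 / (1 + q) ≤ B := by
  have hBnn : 0 ≤ B := le_trans (abs_nonneg _) hB
  have habs : |q - a| ≤ a * B := by
    have h : q / a - 1 = (q - a) / a := by field_simp
    rw [h, abs_div, abs_of_pos ha0, div_le_iff₀ ha0] at hB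
    linarith [hB]
  have hd2 : |q - a| ≤ 2 * (1 + q) := by
    rw [abs_le]; constructor <;> linarith
  have h1 : (1 - a / q) ^ 2 = (q - a) ^ 2 / q ^ 2 := by
    field_simp
  rw [h1]
  have hLHS : (1 / a) * (q ^ 2 / 2) * ((q - a) ^ 2 / q ^ 2) / (1 + q)
      = (q - a) ^ 2 / (2 * a * (1 + q)) := by
    field_simp
  rw [hLHS, div_le_iff₀ (by positivity)]
  nlinarith [mul_le_mul habs hd2 (abs_nonneg (q - a)) (by positivity : (0:ℝ) ≤ a * B),
    abs_mul_abs_self (q - a)]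

/-- optimality of quadratic speed-up: for any continuous annealing
schedule `z` on `[0,T]` and any solution `ψ` of the Schrödinger equation
`i·ψ'(t) = H(z(t))·ψ(t)` starting from the equal superposition state, if the final
success probability `p = ‖P·ψ(T)‖²` is positive, then
`T ≥ √(N/N0)·(p/2)·(1 − √(N0/(N·p)))²/(1 + √p)`. -/
theorem stmt_10 (N : ℕ) (hN : 1 ≤ N) (E : Fin N → ℕ)
    (hN0 : 1 ≤ (Finset.univ.filter fun s : Fin N => E s = 0).card)
    (T : ℝ) (hT : 0 ≤ T) (z : ℝ → ℝ) (hz : ContinuousOn z (Set.Icc 0 T))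
    (ψ : ℝ → (Fin N → ℂ))
    (hψ0 : ψ 0 = fun _ : Fin N => ((1 / Real.sqrt N : ℝ) : ℂ))
    (hSchr : ∀ t ∈ Set.Icc (0 : ℝ) T,
      HasDerivWithinAt ψ (-Complex.I • (Ham N E (z t)).mulVec (ψ t)) (Set.Icc 0 T) t)
    (p : ℝ)
    (hp : p = ∑ s : Fin N,
      ‖(Matrix.diagonal (fun s : Fin N => if E s = 0 then (1 : ℂ) else 0)).mulVec (ψ T) s‖ ^ 2)
    (hppos : 0 < p) :
    Real.sqrt ((N : ℝ) / ((Finset.univ.filter fun s : Fin N => E s = 0).card : ℝ)) *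
        (p / 2) *
        (1 - Real.sqrt
          (((Finset.univ.filter fun s : Fin N => E s = 0).card : ℝ) / ((N : ℝ) * p))) ^ 2 /
        (1 + Real.sqrt p) ≤ T := by
  classical
  set S0 := Finset.univ.filter fun s : Fin N => E s = 0 with hS0
  have hNpos : (0:ℝ) < N := by exact_mod_cast hN
  have hN0pos : (0:ℝ) < (S0.card : ℝ) := by exact_mod_cast hN0
  have hN0leN : (S0.card : ℝ) ≤ N := by
    have := Finset.card_filter_le (Finset.univ : Finset (Fin N)) (fun s => E s = 0)
    have h2 : (Finset.univ : Finset (Fin N)).card = N := Finset.card_fin N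
    exact_mod_cast (hS0 ▸ this).trans_eq h2
  set rn := Real.sqrt N with hrn
  set r0 := Real.sqrt (S0.card : ℝ) with hr0
  have hrnpos : 0 < rn := Real.sqrt_pos.2 hNpos
  have hr0pos : 0 < r0 := Real.sqrt_pos.2 hN0pos
  have hrn_sq : rn * rn = (N:ℝ) := Real.mul_self_sqrt hNpos.le
  -- coordinate form of the Schrödinger equation
  have hcoord : ∀ t ∈ Set.Icc (0:ℝ) T, ∀ s : Fin N,
      HasDerivWithinAt (fun u => ψ u s)
        (-Complex.I * (((z t * (E s : ℝ) : ℝ):ℂ) * ψ t s - (∑ s', ψ t s')/(N:ℂ)))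
        (Set.Icc 0 T) t := by
    intro t ht s
    have h := (hasDerivWithinAt_pi.1 (hSchr t ht)) s
    simpa [ham_apply, smul_eq_mul] using h
  -- norm preservation
  have hnorm := normSq_const N T hT (fun t s => z t * (E s : ℝ)) ψ hcoord
  have hnorm1 : ∀ t ∈ Set.Icc (0:ℝ) T, ∑ s, ‖ψ t s‖ ^ 2 = 1 := by
    intro t ht
    have h1 : ∑ s, Complex.normSq (ψ t s) = 1 := by
      rw [hnorm t ht, hψ0]
      have hns : Complex.normSq ((1 / rn : ℝ):ℂ) = 1/(N:ℝ) := by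
        rw [Complex.normSq_ofReal, div_mul_div_comm, one_mul, hrn_sq]
      simp only [hns, Finset.sum_const, Finset.card_univ, Fintype.card_fin, nsmul_eq_mul]
      field_simp
    rw [← h1]
    exact Finset.sum_congr rfl fun s _ => by
      rw [Complex.sq_norm]
  -- bound on the mean
  have hM : ∀ t ∈ Set.Icc (0:ℝ) T, ‖(∑ s', ψ t s')/(N:ℂ)‖ ≤ 1 / rn := by
    intro t ht
    have h1 : ‖∑ s', ψ t s'‖ ≤ ∑ s', ‖ψ t s'‖ := norm_sum_le _ _
    have h2 : (∑ s', ‖ψ t s'‖)^2 ≤ (N:ℝ) * ∑ s', ‖ψ t s'‖^2 := by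
      have := sq_sum_le_card_mul_sum_sq (s := (Finset.univ : Finset (Fin N)))
        (f := fun s' => ‖ψ t s'‖)
      simpa using this
    rw [hnorm1 t ht, mul_one] at h2
    have hsnn : 0 ≤ ∑ s', ‖ψ t s'‖ := Finset.sum_nonneg fun s _ => norm_nonneg _
    have h4 : ∑ s', ‖ψ t s'‖ ≤ rn := by nlinarith [hrnpos, hrn_sq]
    have h5 : ‖(∑ s', ψ t s')/(N:ℂ)‖ = ‖∑ s', ψ t s'‖ / (N:ℝ) := by
      rw [norm_div]
      norm_num
    rw [h5]
    rw [div_le_div_iff₀ hNpos hrnpos]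
    calc ‖∑ s', ψ t s'‖ * rn ≤ rn * rn := by
          apply mul_le_mul_of_nonneg_right _ hrnpos.le
          exact h1.trans h4
      _ = 1 * (N:ℝ) := by rw [one_mul, hrn_sq]
  -- pick a zero-energy state
  obtain ⟨s0, hs0⟩ := Finset.card_pos.1 (lt_of_lt_of_le Nat.zero_lt_one hN0)
  have hs0E : E s0 = 0 := (Finset.mem_filter.1 hs0).2
  -- derivative of zero-energy coordinates
  have hder0 : ∀ s : Fin N, E s = 0 → ∀ t ∈ Set.Icc (0:ℝ) T,
      HasDerivWithinAt (fun u => ψ u s)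
        (Complex.I * ((∑ s', ψ t s')/(N:ℂ))) (Set.Icc 0 T) t := by
    intro s hs t ht
    have h := hcoord t ht s
    rw [hs] at h
    convert h using 1
    push_cast
    ring
  have hmem0 : (0:ℝ) ∈ Set.Icc (0:ℝ) T := Set.left_mem_Icc.2 hT
  have hmemT : T ∈ Set.Icc (0:ℝ) T := Set.right_mem_Icc.2 hT
  -- zero-energy coordinates coincide
  have heq : ∀ s : Fin N, E s = 0 → ψ T s = ψ T s0 := by
    intro s hs
    have hdiff : ∀ t ∈ Set.Icc (0:ℝ) T,
        HasDerivWithinAt (fun u => ψ u s - ψ u s0) 0 (Set.Icc 0 T) t := by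
      intro t ht
      simpa using (hder0 s hs t ht).fun_sub (hder0 s0 hs0E t ht)
    have hmvt := Convex.norm_image_sub_le_of_norm_hasDerivWithin_le (C := 0)
      (f' := fun _ => 0) hdiff (fun u _ => by simp) (convex_Icc 0 T) hmem0 hmemT
    have h0 : ψ 0 s = ψ 0 s0 := by rw [hψ0]
    have : ψ T s - ψ T s0 = ψ 0 s - ψ 0 s0 := by
      rw [← sub_eq_zero, ← norm_le_zero_iff]; simpa using hmvt
    rw [h0, sub_self] at this
    exact sub_eq_zero.1 this
  -- bound the motion of the zero-energy amplitude
  have hc : ‖ψ T s0 - ψ 0 s0‖ ≤ (1/rn) * T := by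
    have hmvt := Convex.norm_image_sub_le_of_norm_hasDerivWithin_le (C := 1/rn)
      (f := fun u => ψ u s0) (f' := fun t => Complex.I * ((∑ s', ψ t s')/(N:ℂ)))
      (fun t ht => hder0 s0 hs0E t ht)
      (fun t ht => by
        rw [norm_mul, Complex.norm_I, one_mul]; exact hM t ht)
      (convex_Icc 0 T) hmem0 hmemT
    simpa [abs_of_nonneg hT] using hmvt
  -- identify p
  have hpval : p = (S0.card : ℝ) * ‖ψ T s0‖^2 := by
    rw [hp]
    have hterm : ∀ s : Fin N,
        ‖(Matrix.diagonal (fun s : Fin N => if E s = 0 then (1:ℂ) else 0)).mulVec (ψ T) s‖^2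
        = if E s = 0 then ‖ψ T s0‖^2 else 0 := by
      intro s
      rw [Matrix.mulVec_diagonal]
      by_cases h : E s = 0
      · simp [h, heq s h]
      · simp [h]
    rw [Finset.sum_congr rfl fun s _ => hterm s]
    rw [Finset.sum_ite, Finset.sum_const_zero, add_zero, Finset.sum_const, nsmul_eq_mul]
  set q := Real.sqrt p with hq
  have hqpos : 0 < q := Real.sqrt_pos.2 hppos
  have hcnorm : ‖ψ T s0‖ = q / r0 := by
    have h2 : ‖ψ T s0‖^2 = p / (S0.card:ℝ) := by rw [hpval]; field_simp
    rw [← Real.sqrt_sq (norm_nonneg (ψ T s0)), h2, Real.sqrt_div hppos.le]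
  have h0norm : ‖ψ 0 s0‖ = 1 / rn := by
    rw [hψ0]
    show ‖((1/rn : ℝ):ℂ)‖ = 1/rn
    rw [Complex.norm_real]
    exact Real.norm_of_nonneg (by positivity)
  -- key inequality
  have hkey : |q / r0 - 1 / rn| ≤ T / rn := by
    calc |q / r0 - 1 / rn| = |‖ψ T s0‖ - ‖ψ 0 s0‖| := by rw [hcnorm, h0norm]
      _ ≤ ‖ψ T s0 - ψ 0 s0‖ := abs_norm_sub_norm_le _ _
      _ ≤ (1/rn) * T := hc
      _ = T / rn := by ring
  have ha0 : 0 < r0 / rn := div_pos hr0pos hrnpos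
  have ha1 : r0 / rn ≤ 1 := by
    rw [div_le_one hrnpos, hr0, hrn]
    exact Real.sqrt_le_sqrt hN0leN
  have hB : |q / (r0 / rn) - 1| ≤ T := by
    have h1 : q / (r0 / rn) - 1 = rn * (q / r0 - 1 / rn) := by field_simp
    rw [h1, abs_mul, abs_of_pos hrnpos]
    calc rn * |q / r0 - 1 / rn| ≤ rn * (T / rn) :=
          mul_le_mul_of_nonneg_left hkey hrnpos.le
      _ = T := by field_simp
  have halg := alg_ineq (r0 / rn) q T ha0 ha1 hqpos hB
  -- rewrite the goal
  have e1 : Real.sqrt ((N:ℝ) / (S0.card:ℝ)) = 1 / (r0 / rn) := by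
    rw [Real.sqrt_div hNpos.le, one_div_div, hrn, hr0]
  have e2 : Real.sqrt ((S0.card:ℝ) / ((N:ℝ) * p)) = (r0 / rn) / q := by
    rw [Real.sqrt_div hN0pos.le, Real.sqrt_mul hNpos.le, ← hrn, ← hr0, ← hq]
    rw [div_div]
  have e3 : p = q ^ 2 := (Real.sq_sqrt hppos.le).symm
  rw [e1, e2, e3]
  exact halg
end

section
/- Let z > 0, assume N0 := #{s : E(s) = 0} ≥ 1, and let λ < 0 and Δ > 0 satisfy |λ| ≤ z·N0/(N·Δ). Define v ∈ ℝ^N by v(s) = 1/(z·E(s) − λ). Then ∑_{s : E(s)=0} v(s)² ≥ (N·Δ²/N0) · ∑_{s : E(s)≥1} v(s)². -/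
/-- core of the stopping condition: with `N0 ≥ 1` optimal states,
`λ < 0`, `Δ > 0` and `|λ| ≤ z·N0/(N·Δ)`, the vector `v(s) = 1/(z·E(s) − λ)` satisfies
`∑_{E(s)=0} v(s)² ≥ (N·Δ²/N0)·∑_{E(s)≥1} v(s)²`. -/
theorem stmt_11 (N : ℕ) (hN : 1 ≤ N) (E : Fin N → ℕ) (z : ℝ) (hz : 0 < z)
    (hN0 : 1 ≤ (Finset.univ.filter fun s : Fin N => E s = 0).card)
    (lam Δ : ℝ) (hlam : lam < 0) (hΔ : 0 < Δ)
    (hbound : |lam| ≤ z * ((Finset.univ.filter fun s : Fin N => E s = 0).card : ℝ) /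
      ((N : ℝ) * Δ)) :
    ∑ s ∈ Finset.univ.filter (fun s : Fin N => E s = 0),
        (1 / (z * (E s : ℝ) - lam)) ^ 2 ≥
      (N : ℝ) * Δ ^ 2 / ((Finset.univ.filter fun s : Fin N => E s = 0).card : ℝ) *
        ∑ s ∈ Finset.univ.filter (fun s : Fin N => 1 ≤ E s),
          (1 / (z * (E s : ℝ) - lam)) ^ 2 := by
  set S0 := Finset.univ.filter fun s : Fin N => E s = 0 with hS0
  set S1 := Finset.univ.filter fun s : Fin N => 1 ≤ E s with hS1
  have hN0pos : (0:ℝ) < (S0.card : ℝ) := by exact_mod_cast Nat.lt_of_lt_of_le Nat.zero_lt_one hN0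
  have hNpos : (0:ℝ) < (N : ℝ) := by exact_mod_cast Nat.lt_of_lt_of_le Nat.zero_lt_one hN
  have hlamne : lam ≠ 0 := ne_of_lt hlam
  have hzne : z ≠ 0 := ne_of_gt hz
  have hlam2 : (0:ℝ) < lam ^ 2 := by nlinarith
  have hz2 : (0:ℝ) < z ^ 2 := by positivity
  -- LHS equals N0 / lam^2
  have hLHS : ∑ s ∈ S0, (1 / (z * (E s : ℝ) - lam)) ^ 2 = (S0.card : ℝ) * (1 / lam ^ 2) := by
    rw [Finset.sum_congr rfl (fun s hs => ?_), Finset.sum_const, nsmul_eq_mul]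
    have hE : E s = 0 := (Finset.mem_filter.mp hs).2
    rw [hE]
    push_cast
    rw [mul_zero, zero_sub, div_pow, one_pow, neg_pow]
    simp
  -- each term on S1 is ≤ 1/z^2
  have hterm : ∀ s ∈ S1, (1 / (z * (E s : ℝ) - lam)) ^ 2 ≤ (1 / z) ^ 2 := by
    intro s hs
    have hE : 1 ≤ E s := (Finset.mem_filter.mp hs).2
    have hE' : (1:ℝ) ≤ (E s : ℝ) := by exact_mod_cast hE
    have hge : z ≤ z * (E s : ℝ) - lam := by nlinarith
    have h0 : 0 < z * (E s : ℝ) - lam := lt_of_lt_of_le hz hge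
    have h1 : 1 / (z * (E s : ℝ) - lam) ≤ 1 / z := one_div_le_one_div_of_le hz hge
    have h2 : 0 ≤ 1 / (z * (E s : ℝ) - lam) := le_of_lt (one_div_pos.mpr h0)
    exact pow_le_pow_left₀ h2 h1 2
  have hsum1 : ∑ s ∈ S1, (1 / (z * (E s : ℝ) - lam)) ^ 2 ≤ (N : ℝ) * (1 / z) ^ 2 := by
    calc ∑ s ∈ S1, (1 / (z * (E s : ℝ) - lam)) ^ 2
        ≤ ∑ _s ∈ S1, (1 / z) ^ 2 := Finset.sum_le_sum hterm
      _ = (S1.card : ℝ) * (1 / z) ^ 2 := by rw [Finset.sum_const, nsmul_eq_mul]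
      _ ≤ (N : ℝ) * (1 / z) ^ 2 := by
          have hc : (S1.card : ℝ) ≤ (N : ℝ) := by
            exact_mod_cast (Finset.card_filter_le _ _).trans (by simp)
          exact mul_le_mul_of_nonneg_right hc (by positivity)
  -- key numeric bound from hbound
  have hb : |lam| * ((N : ℝ) * Δ) ≤ z * (S0.card : ℝ) := by
    have hND : (0:ℝ) < (N : ℝ) * Δ := by positivity
    calc |lam| * ((N : ℝ) * Δ)
        ≤ z * (S0.card : ℝ) / ((N : ℝ) * Δ) * ((N : ℝ) * Δ) :=
          mul_le_mul_of_nonneg_right hbound hND.le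
      _ = z * (S0.card : ℝ) := div_mul_cancel₀ _ (ne_of_gt hND)
  have hb2 : lam ^ 2 * ((N : ℝ) * Δ) ^ 2 ≤ z ^ 2 * (S0.card : ℝ) ^ 2 := by
    have h := mul_self_le_mul_self (by positivity) hb
    have habs : |lam| * |lam| = lam * lam := abs_mul_abs_self lam
    nlinarith [abs_nonneg lam]
  -- conclude
  rw [hLHS, ge_iff_le]
  have key : (N:ℝ) * Δ ^ 2 / (S0.card:ℝ) * ((N:ℝ) * (1/z) ^ 2) ≤ (S0.card:ℝ) * (1 / lam ^ 2) := by
    rw [div_mul_eq_mul_div, div_le_iff₀ hN0pos]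
    have e1 : (N:ℝ) * Δ ^ 2 * ((N:ℝ) * (1/z) ^ 2)
        = lam ^ 2 * ((N:ℝ) * Δ) ^ 2 * ((z ^ 2)⁻¹ * (lam ^ 2)⁻¹) := by
      field_simp
    have e2 : (S0.card:ℝ) * (1 / lam ^ 2) * (S0.card:ℝ)
        = z ^ 2 * (S0.card:ℝ) ^ 2 * ((z ^ 2)⁻¹ * (lam ^ 2)⁻¹) := by
      field_simp
    rw [e1, e2]
    exact mul_le_mul_of_nonneg_right hb2 (by positivity)
  calc (N:ℝ) * Δ ^ 2 / (S0.card:ℝ) * ∑ s ∈ S1, (1 / (z * (E s : ℝ) - lam)) ^ 2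
      ≤ (N:ℝ) * Δ ^ 2 / (S0.card:ℝ) * ((N:ℝ) * (1/z) ^ 2) :=
        mul_le_mul_of_nonneg_left hsum1 (by positivity)
    _ ≤ (S0.card:ℝ) * (1 / lam ^ 2) := key
end

section
/- Fix assignments s, s' ∈ {−1,+1}^n that differ in exactly d coordinates, with 1 ≤ d ≤ n, and consider a single random clause (a uniform 3-element subset S ⊆ {1,…,n} with independent uniform signs). Set p1 := C(n−d,3)/C(n,3) (with C(n−d,3) = 0 if n − d < 3). Then: the probability that the clause is violated by both s and s' equals p1/8, and the probability that it is satisfied by s but violated by s' equals (1 − p1)/8. Equivalently, conditional on e(s) = 1 the probability of e(s') = 1 is p1, and conditional on e(s) = 0 it is p0 := (1 − p1)/7. -/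
/-- A random 3-SAT clause: a 3-element subset of the variables together with signs. -/
abbrev Clause (n : ℕ) := {S : Finset (Fin n) // S.card = 3} × (Fin n → Bool)

/-- Clause `c` is violated by the assignment `s` iff `s` agrees with the signs on all
three variables of the clause. -/
abbrev violated {n : ℕ} (s : Fin n → Bool) (c : Clause n) : Prop :=
  ∀ i ∈ c.1.1, s i = c.2 i

/-- Uniform probability of an event on a finite sample space. -/
noncomputable def unifProb {α : Type*} [Fintype α] (p : α → Prop) [DecidablePred p] : ℝ :=
  ((Finset.univ.filter p).card : ℝ) / (Fintype.card α)

section aux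

open Finset

lemma aux_card_prod {A B : Type*} [Fintype A] [Fintype B] (p : A × B → Prop) [DecidablePred p] :
    (Finset.univ.filter p).card = ∑ a : A, (Finset.univ.filter fun b => p (a, b)).card := by
  classical
  rw [Finset.card_eq_sum_card_fiberwise (f := Prod.fst) (t := Finset.univ)
    (fun x _ => Finset.mem_univ _)]
  refine Finset.sum_congr rfl fun a _ => ?_
  refine Finset.card_nbij' (fun c => c.2) (fun b => (a, b)) ?_ ?_ ?_ ?_
  · rintro ⟨a', b⟩ hc
    simp only [Finset.mem_coe, Finset.mem_filter, Finset.mem_univ, true_and] at hc ⊢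
    rcases hc with ⟨h1, h2⟩
    subst h2; exact h1
  · intro b hb
    simp only [Finset.mem_coe, Finset.mem_filter, Finset.mem_univ, true_and] at hb ⊢
    exact ⟨hb, trivial⟩
  · rintro ⟨a', b⟩ hc
    simp only [Finset.mem_coe, Finset.mem_filter] at hc
    simp [hc.2]
  · intro b _; rfl

lemma aux_card_fix {n : ℕ} (S : Finset (Fin n)) (t : Fin n → Bool) :
    (Finset.univ.filter fun J : Fin n → Bool => ∀ i ∈ S, t i = J i).card = 2 ^ (n - S.card) := by
  rw [← Fintype.card_subtype]
  rw [Fintype.card_congr (Equiv.subtypePiEquivPi (p := fun i (b : Bool) => i ∈ S → t i = b))]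
  rw [Fintype.card_pi]
  have h : ∀ i : Fin n, Fintype.card {b : Bool // i ∈ S → t i = b}
      = if i ∈ S then 1 else 2 := by
    intro i
    by_cases h : i ∈ S <;> simp [Fintype.card_subtype, h, Finset.filter_eq']
  rw [Finset.prod_congr rfl (fun i _ => h i), ← Finset.prod_mul_prod_compl S]
  have h1 : (∏ i ∈ S, (if i ∈ S then 1 else 2)) = 1 :=
    Finset.prod_eq_one (fun i hi => if_pos hi)
  have h2 : (∏ i ∈ Sᶜ, (if i ∈ S then 1 else 2)) = 2 ^ (n - S.card) := by
    rw [Finset.prod_congr rfl (fun i hi => if_neg (Finset.mem_compl.1 hi))]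
    rw [Finset.prod_const, Finset.card_compl, Fintype.card_fin]
  rw [h1, h2, one_mul]

end aux

section counts

open Finset

variable {n : ℕ} (s s' : Fin n → Bool)

/-- agreement set -/
noncomputable def agr (s s' : Fin n → Bool) : Finset (Fin n) :=
  Finset.univ.filter fun i => s i = s' i

lemma card_subsets_agr :
    (Finset.univ.filter fun S : {S : Finset (Fin n) // S.card = 3} =>
      (S : Finset (Fin n)) ⊆ agr s s').card = (agr s s').card.choose 3 := by
  classical
  rw [← Finset.card_powersetCard 3 (agr s s')]
  refine Finset.card_bij (fun S _ => (S : Finset (Fin n))) ?_ ?_ ?_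
  · intro S hS
    simp only [Finset.mem_filter] at hS
    exact Finset.mem_powersetCard.2 ⟨hS.2, S.2⟩
  · intro S1 h1 S2 h2 h; exact Subtype.ext h
  · intro T hT
    rcases Finset.mem_powersetCard.1 hT with ⟨hsub, hcard⟩
    exact ⟨⟨T, hcard⟩, by simp [hsub], rfl⟩

lemma count_both :
    (Finset.univ.filter fun c : Clause n => violated s c ∧ violated s' c).card
      = (agr s s').card.choose 3 * 2 ^ (n - 3) := by
  classical
  rw [aux_card_prod]
  have hterm : ∀ S : {S : Finset (Fin n) // S.card = 3},
      (Finset.univ.filter fun J : Fin n → Bool =>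
          violated s (S, J) ∧ violated s' (S, J)).card
        = if (S : Finset (Fin n)) ⊆ agr s s' then 2 ^ (n - 3) else 0 := by
    intro S
    by_cases h : (S : Finset (Fin n)) ⊆ agr s s'
    · rw [if_pos h]
      have hagr : ∀ i ∈ (S : Finset (Fin n)), s i = s' i := by
        intro i hi
        have := h hi
        simpa [agr] using this
      have : (Finset.univ.filter fun J : Fin n → Bool =>
          violated s (S, J) ∧ violated s' (S, J))
          = Finset.univ.filter fun J : Fin n → Bool => ∀ i ∈ (S : Finset (Fin n)), s i = J i := by
        apply Finset.filter_congr
        intro J _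
        constructor
        · exact fun hJ => hJ.1
        · exact fun hJ => ⟨hJ, fun i hi => (hagr i hi) ▸ hJ i hi⟩
      rw [this, aux_card_fix]
      rw [S.2]
    · rw [if_neg h]
      rw [Finset.card_eq_zero, Finset.filter_eq_empty_iff]
      intro J _
      rintro ⟨h1, h2⟩
      apply h
      intro i hi
      simp only [agr, Finset.mem_filter, Finset.mem_univ, true_and]
      rw [h1 i hi, h2 i hi]
  simp only [hterm]
  rw [← Finset.sum_filter]
  rw [Finset.sum_const, smul_eq_mul, card_subsets_agr]

lemma count_viol :
    (Finset.univ.filter fun c : Clause n => violated s c).card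
      = n.choose 3 * 2 ^ (n - 3) := by
  classical
  rw [aux_card_prod]
  have hterm : ∀ S : {S : Finset (Fin n) // S.card = 3},
      (Finset.univ.filter fun J : Fin n → Bool => violated s (S, J)).card = 2 ^ (n - 3) := by
    intro S
    have := aux_card_fix (S : Finset (Fin n)) s
    rw [S.2] at this
    exact this
  simp only [hterm]
  rw [Finset.sum_const, smul_eq_mul]
  congr 1
  simpa using Fintype.card_finset_len (α := Fin n) 3

lemma count_notand :
    (Finset.univ.filter fun c : Clause n => ¬ violated s c ∧ violated s' c).card
      = (n.choose 3 - (agr s s').card.choose 3) * 2 ^ (n - 3) := by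
  classical
  rw [aux_card_prod]
  have hterm : ∀ S : {S : Finset (Fin n) // S.card = 3},
      (Finset.univ.filter fun J : Fin n → Bool =>
          ¬ violated s (S, J) ∧ violated s' (S, J)).card
        = if (S : Finset (Fin n)) ⊆ agr s s' then 0 else 2 ^ (n - 3) := by
    intro S
    by_cases h : (S : Finset (Fin n)) ⊆ agr s s'
    · rw [if_pos h]
      rw [Finset.card_eq_zero, Finset.filter_eq_empty_iff]
      intro J _
      rintro ⟨h1, h2⟩
      apply h1
      intro i hi
      have : s i = s' i := by simpa [agr] using h hi
      rw [this, h2 i hi]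
    · rw [if_neg h]
      have hex : ∃ i ∈ (S : Finset (Fin n)), s i ≠ s' i := by
        by_contra hc
        push_neg at hc
        exact h fun i hi => by simp [agr, hc i hi]
      rcases hex with ⟨i0, hi0, hne0⟩
      have : (Finset.univ.filter fun J : Fin n → Bool =>
          ¬ violated s (S, J) ∧ violated s' (S, J))
          = Finset.univ.filter fun J : Fin n → Bool =>
              ∀ i ∈ (S : Finset (Fin n)), s' i = J i := by
        apply Finset.filter_congr
        intro J _
        constructor
        · exact fun hJ => hJ.2
        · intro hJ
          refine ⟨fun hv => hne0 ?_, hJ⟩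
          rw [hv i0 hi0, hJ i0 hi0]
      rw [this, aux_card_fix, S.2]
  simp only [hterm]
  have : ∀ S : {S : Finset (Fin n) // S.card = 3},
      (if (S : Finset (Fin n)) ⊆ agr s s' then 0 else 2 ^ (n - 3))
        = if ¬ ((S : Finset (Fin n)) ⊆ agr s s') then 2 ^ (n - 3) else 0 := by
    intro S; by_cases h : (S : Finset (Fin n)) ⊆ agr s s' <;> simp [h]
  simp only [this]
  rw [← Finset.sum_filter, Finset.sum_const, smul_eq_mul]
  congr 1
  have hsplit := Finset.card_filter_add_card_filter_not
    (s := (Finset.univ : Finset {S : Finset (Fin n) // S.card = 3}))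
    (p := fun S => (S : Finset (Fin n)) ⊆ agr s s')
  have hcard : (Finset.univ : Finset {S : Finset (Fin n) // S.card = 3}).card = n.choose 3 := by
    rw [Finset.card_univ]
    simpa using Fintype.card_finset_len (α := Fin n) 3
  rw [card_subsets_agr, hcard] at hsplit
  omega

lemma count_not :
    (Finset.univ.filter fun c : Clause n => ¬ violated s c).card
      = n.choose 3 * (2 ^ n - 2 ^ (n - 3)) := by
  classical
  rw [aux_card_prod]
  have hterm : ∀ S : {S : Finset (Fin n) // S.card = 3},
      (Finset.univ.filter fun J : Fin n → Bool => ¬ violated s (S, J)).card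
        = 2 ^ n - 2 ^ (n - 3) := by
    intro S
    have hsplit := Finset.card_filter_add_card_filter_not
      (s := (Finset.univ : Finset (Fin n → Bool)))
      (p := fun J => violated s (S, J))
    have h1 : (Finset.univ.filter fun J : Fin n → Bool => violated s (S, J)).card
        = 2 ^ (n - 3) := by
      have := aux_card_fix (S : Finset (Fin n)) s
      rw [S.2] at this
      exact this
    have h2 : (Finset.univ : Finset (Fin n → Bool)).card = 2 ^ n := by
      simp [Finset.card_univ]
    rw [h1, h2] at hsplit
    omega
  simp only [hterm]
  rw [Finset.sum_const, smul_eq_mul]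
  congr 1
  rw [Finset.card_univ]
  simpa using Fintype.card_finset_len (α := Fin n) 3

end counts

/-- for assignments `s, s'` differing in exactly `d` coordinates and a
single random clause, with `p1 = C(n−d,3)/C(n,3)`: the probability that the clause is
violated by both assignments is `p1/8`, the probability that it is satisfied by `s` but
violated by `s'` is `(1 − p1)/8`, and the corresponding conditional probabilities are
`p1` and `p0 = (1 − p1)/7`. -/
theorem stmt_16 (n : ℕ) (hn : 3 ≤ n) (s s' : Fin n → Bool) (d : ℕ)
    (hd1 : 1 ≤ d) (hdn : d ≤ n)
    (hdiff : (Finset.univ.filter fun i : Fin n => s i ≠ s' i).card = d) :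
    unifProb (fun c : Clause n => violated s c ∧ violated s' c) =
      ((n - d).choose 3 : ℝ) / (n.choose 3 : ℝ) / 8 ∧
    unifProb (fun c : Clause n => ¬ violated s c ∧ violated s' c) =
      (1 - ((n - d).choose 3 : ℝ) / (n.choose 3 : ℝ)) / 8 ∧
    ((Finset.univ.filter fun c : Clause n => violated s c ∧ violated s' c).card : ℝ) /
        ((Finset.univ.filter fun c : Clause n => violated s c).card : ℝ) =
      ((n - d).choose 3 : ℝ) / (n.choose 3 : ℝ) ∧
    ((Finset.univ.filter fun c : Clause n => ¬ violated s c ∧ violated s' c).card : ℝ) /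
        ((Finset.univ.filter fun c : Clause n => ¬ violated s c).card : ℝ) =
      (1 - ((n - d).choose 3 : ℝ) / (n.choose 3 : ℝ)) / 7 := by
  classical
  have hagr : (agr s s').card = n - d := by
    have hsplit := Finset.card_filter_add_card_filter_not
      (s := (Finset.univ : Finset (Fin n))) (p := fun i => s i = s' i)
    have h1 : (Finset.univ.filter fun i : Fin n => ¬ s i = s' i).card = d := by
      convert hdiff using 2
    rw [h1] at hsplit
    simp only [Finset.card_univ, Fintype.card_fin] at hsplit
    simp only [agr]
    omega
  have hboth := count_both s s'
  have hviol := count_viol (n := n) s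
  have hnotand := count_notand s s'
  have hnot := count_not (n := n) s
  rw [hagr] at hboth hnotand
  have hC : 0 < n.choose 3 := Nat.choose_pos hn
  have hle : (n - d).choose 3 ≤ n.choose 3 := Nat.choose_le_choose 3 (Nat.sub_le n d)
  have hcardC : (Fintype.card (Clause n) : ℕ) = n.choose 3 * 2 ^ n := by
    simp [Fintype.card_prod]
  have hpow : 2 ^ n = 8 * 2 ^ (n - 3) := by
    have h3 : n - 3 + 3 = n := by omega
    calc 2 ^ n = 2 ^ (n - 3 + 3) := by rw [h3]
    _ = 8 * 2 ^ (n - 3) := by ring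
  have hCne : ((n.choose 3 : ℕ) : ℝ) ≠ 0 := by
    exact_mod_cast hC.ne'
  have hPne : ((2 : ℝ)) ^ (n - 3) ≠ 0 := by positivity
  refine ⟨?_, ?_, ?_, ?_⟩
  · rw [unifProb, hboth, hcardC]
    push_cast [hpow]
    field_simp
  · rw [unifProb, hnotand, hcardC]
    push_cast [hpow, Nat.cast_sub hle]
    field_simp
  · rw [hboth, hviol]
    push_cast
    field_simp
  · rw [hnotand, hnot]
    have h7 : 2 ^ n - 2 ^ (n - 3) = 7 * 2 ^ (n - 3) := by omega
    rw [h7]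
    push_cast [Nat.cast_sub hle]
    field_simp
end

section
/- Draw a random 3-SAT instance with m independent clauses, let N = 2^n, and for each natural number k let N_k := #{s ∈ {−1,+1}^n : E(s) = k} and n_k := N_k/N (random variables). Write p_k := C(m,k)·(1/8)^k·(7/8)^(m−k). Then for all 0 ≤ k, k' ≤ m, the second moment of the density of states satisfies: E[n_k · n_{k'}] = (p_k/N)·(δ_{k,k'} + ∑_{d=1}^{n} C(n,d)·p(k' | k, d)), where p(k' | k, d) := ∑_{x = max(k+k'−m, 0)}^{min(k, k')} B(x | k, p1(d))·B(k'−x | m−k, p0(d)), with p1(d) := C(n−d,3)/C(n,3), p0(d) := (1 − p1(d))/7, and B(x | M, q) := C(M,x)·q^x·(1−q)^(M−x). -/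
/-- A random 3-SAT instance: `m` independent clauses. -/
abbrev Inst (n m : ℕ) := Fin m → Clause n

/-- The energy `E(s)`: the number of violated clauses. -/
def energy {n m : ℕ} (s : Fin n → Bool) (ω : Inst n m) : ℕ :=
  (Finset.univ.filter fun a => violated s (ω a)).card

/-- The (random) normalized density of states `n_k = N_k / N` with `N = 2^n`. -/
noncomputable def densStates {n m : ℕ} (ω : Inst n m) (k : ℕ) : ℝ :=
  ((Finset.univ.filter fun s : Fin n → Bool => energy s ω = k).card : ℝ) / 2 ^ n

/-- The binomial probability `B(x | M, q) = C(M,x)·q^x·(1−q)^(M−x)`. -/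
noncomputable def binomProb (x M : ℕ) (q : ℝ) : ℝ :=
  (M.choose x : ℝ) * q ^ x * (1 - q) ^ (M - x)

/-- The conditional probability `p(k' | k, d)` of the paper. -/
noncomputable def pCond (n m k k' d : ℕ) : ℝ :=
  ∑ x ∈ Finset.Icc (max (k + k' - m) 0) (min k k'),
    binomProb x k (((n - d).choose 3 : ℝ) / (n.choose 3 : ℝ)) *
      binomProb (k' - x) (m - k) ((1 - ((n - d).choose 3 : ℝ) / (n.choose 3 : ℝ)) / 7)

/-! ### Auxiliary machinery -/

open Finset

section Aux

lemma SAT18.card_pi_filter {m : ℕ} {γ : Type*} [Fintype γ] [DecidableEq γ]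
    (S : Fin m → Finset γ) (p : (Fin m → γ) → Prop) [DecidablePred p]
    (hp : ∀ ω, p ω ↔ ∀ a, ω a ∈ S a) :
    (univ.filter p).card = ∏ a, (S a).card := by
  rw [← Fintype.card_piFinset]
  congr 1; ext ω; simp [Fintype.mem_piFinset, hp]

lemma SAT18.card_fix {n : ℕ} (s : Fin n → Bool) (S : Finset (Fin n)) (hS : S.card = 3) :
    (univ.filter fun J : Fin n → Bool => ∀ i ∈ S, s i = J i).card = 2 ^ (n - 3) := by
  rw [SAT18.card_pi_filter (fun i => if i ∈ S then {s i} else univ)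
    _ (fun J => by
      constructor
      · intro h i
        by_cases hi : i ∈ S <;> simp [hi, (h i ·|>.symm)]
      · intro h i hi
        have := h i
        simp [hi] at this
        exact this.symm)]
  have h1 : ∀ i : Fin n, (if i ∈ S then ({s i} : Finset Bool) else univ).card
      = if i ∈ S then 1 else 2 := by
    intro i; by_cases hi : i ∈ S <;> simp [hi]
  simp only [h1]
  rw [Finset.prod_ite, Finset.prod_const, Finset.prod_const, one_pow, one_mul]
  congr 1
  rw [Finset.filter_not, Finset.filter_univ_mem, card_sdiff_of_subset (subset_univ _)]
  simp [hS]

lemma SAT18.card_viol {n : ℕ} (s : Fin n → Bool) :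
    (univ.filter fun c : Clause n => violated s c).card = n.choose 3 * 2 ^ (n - 3) := by
  rw [Finset.card_filter]
  rw [Fintype.sum_prod_type]
  have h : ∀ S : {S : Finset (Fin n) // S.card = 3},
      (∑ J : Fin n → Bool, if violated s (S, J) then (1:ℕ) else 0) = 2 ^ (n - 3) := by
    intro S
    rw [← Finset.card_filter]
    exact SAT18.card_fix s S.1 S.2
  simp only [h, Finset.sum_const, smul_eq_mul, card_univ]
  rw [Fintype.card_finset_len]
  simp

lemma SAT18.card_viol_both {n : ℕ} (s t : Fin n → Bool) :
    (univ.filter fun c : Clause n => violated s c ∧ violated t c).card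
      = ((univ.filter fun i => s i = t i).card).choose 3 * 2 ^ (n - 3) := by
  set A := univ.filter fun i : Fin n => s i = t i with hA
  rw [Finset.card_filter, Fintype.sum_prod_type]
  have key : ∀ S : {S : Finset (Fin n) // S.card = 3},
      (∑ J : Fin n → Bool, if violated s (S, J) ∧ violated t (S, J) then (1:ℕ) else 0)
        = if S.1 ⊆ A then 2 ^ (n - 3) else 0 := by
    intro S
    rw [← Finset.card_filter]
    by_cases hSA : S.1 ⊆ A
    · rw [if_pos hSA, ← SAT18.card_fix s S.1 S.2]
      congr 1
      ext J
      simp only [mem_filter, mem_univ, true_and]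
      constructor
      · exact fun h => h.1
      · intro h
        refine ⟨h, fun i hi => ?_⟩
        have := hSA hi
        rw [hA, mem_filter] at this
        rw [← this.2]
        exact h i hi
    · rw [if_neg hSA]
      rw [Finset.card_eq_zero, Finset.filter_eq_empty_iff]
      intro J _
      rintro ⟨h1, h2⟩
      obtain ⟨i, hiS, hiA⟩ := Finset.not_subset.mp hSA
      exact hiA (by rw [hA, mem_filter]; exact ⟨mem_univ _, (h1 i hiS).trans (h2 i hiS).symm⟩)
  simp only [key]
  rw [Finset.sum_ite, Finset.sum_const_zero, add_zero, Finset.sum_const, smul_eq_mul]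
  congr 1
  rw [← Finset.card_powersetCard]
  apply Finset.card_bij (fun S _ => S.1)
  · intro S hS
    simp only [mem_filter, mem_univ, true_and] at hS
    rw [mem_powersetCard]
    exact ⟨hS, S.2⟩
  · intro a _ b _ h
    exact Subtype.ext h
  · intro S hS
    rw [mem_powersetCard] at hS
    exact ⟨⟨S, hS.2⟩, by simp [hS.1], rfl⟩

/-- The number of clauses with prescribed violation pattern w.r.t. `s` and `t`. -/
def SAT18.cnt2 {n : ℕ} (s t : Fin n → Bool) (b₁ b₂ : Bool) : ℕ :=
  (univ.filter fun c : Clause n =>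
    (violated s c ↔ b₁ = true) ∧ (violated t c ↔ b₂ = true)).card

namespace SAT18

lemma cnt2_add_right {n : ℕ} (s t : Fin n → Bool) (b₁ : Bool) :
    cnt2 s t b₁ true + cnt2 s t b₁ false
      = (univ.filter fun c : Clause n => (violated s c ↔ b₁ = true)).card := by
  unfold cnt2
  rw [← Finset.filter_filter, ← Finset.filter_filter]
  have h : (univ.filter fun c : Clause n => violated s c ↔ b₁ = true).filter
        (fun c : Clause n => violated t c ↔ false = true)
      = (univ.filter fun c : Clause n => violated s c ↔ b₁ = true).filter
        (fun c : Clause n => ¬(violated t c ↔ true = true)) :=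
    Finset.filter_congr fun c _ => by simp
  rw [h]
  exact Finset.card_filter_add_card_filter_not _

lemma card_clause {n : ℕ} : Fintype.card (Clause n) = n.choose 3 * 2 ^ n := by
  rw [Fintype.card_prod, Fintype.card_finset_len]
  simp

lemma cnt2_total {n : ℕ} (s t : Fin n → Bool) :
    (cnt2 s t true true + cnt2 s t true false) + (cnt2 s t false true + cnt2 s t false false)
      = n.choose 3 * 2 ^ n := by
  rw [cnt2_add_right, cnt2_add_right, ← card_clause]
  have h : (univ.filter fun c : Clause n => violated s c ↔ false = true)
      = univ.filter (fun c : Clause n => ¬(violated s c ↔ true = true)) :=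
    Finset.filter_congr fun c _ => by simp
  rw [h, Finset.card_filter_add_card_filter_not, Finset.card_univ]

lemma cnt2_comm {n : ℕ} (s t : Fin n → Bool) (b₁ b₂ : Bool) :
    cnt2 s t b₁ b₂ = cnt2 t s b₂ b₁ := by
  unfold cnt2
  congr 1
  exact Finset.filter_congr fun c _ => and_comm

lemma cnt2_true_true {n : ℕ} (s t : Fin n → Bool) :
    cnt2 s t true true
      = (n - (univ.filter fun i => s i ≠ t i).card).choose 3 * 2 ^ (n - 3) := by
  unfold cnt2
  have h : (univ.filter fun c : Clause n =>
        (violated s c ↔ true = true) ∧ (violated t c ↔ true = true))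
      = univ.filter fun c : Clause n => violated s c ∧ violated t c :=
    Finset.filter_congr fun c _ => by simp
  rw [h, card_viol_both]
  congr 2
  have h2 := Finset.card_filter_add_card_filter_not
    (s := (univ : Finset (Fin n))) (p := fun i => s i = t i)
  rw [Finset.card_univ, Fintype.card_fin] at h2
  have h3 : (univ.filter fun i : Fin n => ¬ s i = t i).card
      = (univ.filter fun i : Fin n => s i ≠ t i).card := rfl
  rw [h3] at h2
  omega

lemma cnt2_viol_s {n : ℕ} (s t : Fin n → Bool) :
    cnt2 s t true true + cnt2 s t true false = n.choose 3 * 2 ^ (n - 3) := by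
  rw [cnt2_add_right]
  have h : (univ.filter fun c : Clause n => (violated s c ↔ true = true))
      = univ.filter fun c : Clause n => violated s c :=
    Finset.filter_congr fun c _ => by simp
  rw [h, card_viol s]

lemma cnt2_viol_t {n : ℕ} (s t : Fin n → Bool) :
    cnt2 s t true true + cnt2 s t false true = n.choose 3 * 2 ^ (n - 3) := by
  rw [cnt2_comm s t true true, cnt2_comm s t false true]
  exact cnt2_viol_s t s

lemma cnt2_real {n : ℕ} (s t : Fin n → Bool) (hn : 3 ≤ n) :
    ((cnt2 s t true true : ℝ) = ((n.choose 3 : ℝ) * 2 ^ n) * (1/8) *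
        (((n - (univ.filter fun i => s i ≠ t i).card).choose 3 : ℝ) / (n.choose 3 : ℝ)) ∧
     (cnt2 s t true false : ℝ) = ((n.choose 3 : ℝ) * 2 ^ n) * (1/8) *
        (1 - ((n - (univ.filter fun i => s i ≠ t i).card).choose 3 : ℝ) / (n.choose 3 : ℝ))) ∧
    ((cnt2 s t false true : ℝ) = ((n.choose 3 : ℝ) * 2 ^ n) * (7/8) *
        ((1 - ((n - (univ.filter fun i => s i ≠ t i).card).choose 3 : ℝ) / (n.choose 3 : ℝ)) / 7) ∧
     (cnt2 s t false false : ℝ) = ((n.choose 3 : ℝ) * 2 ^ n) * (7/8) *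
        (1 - (1 - ((n - (univ.filter fun i => s i ≠ t i).card).choose 3 : ℝ) / (n.choose 3 : ℝ)) / 7)) := by
  have h11 := cnt2_true_true s t
  have h1 := cnt2_viol_s s t
  have h2 := cnt2_viol_t s t
  have htot := cnt2_total s t
  set d := (univ.filter fun i : Fin n => s i ≠ t i).card
  set q1 : ℝ := ((n - d).choose 3 : ℝ) / (n.choose 3 : ℝ) with hq1
  set T : ℝ := (n.choose 3 : ℝ) * 2 ^ n with hT
  have hc : (n.choose 3 : ℝ) ≠ 0 := Nat.cast_ne_zero.mpr (Nat.choose_pos hn).ne'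
  have hpow : (2:ℝ) ^ n = 2 ^ (n - 3) * 8 := by
    rw [show n = (n - 3) + 3 by omega, pow_add]; norm_num
  set X : ℝ := (n.choose 3 : ℝ) * 2 ^ (n - 3) with hX
  set Y : ℝ := ((n - d).choose 3 : ℝ) * 2 ^ (n - 3) with hY
  have h11R : (cnt2 s t true true : ℝ) = Y := by rw [h11]; push_cast; rfl
  have h1R : (cnt2 s t true true : ℝ) + (cnt2 s t true false : ℝ) = X := by
    rw [← Nat.cast_add, h1]; push_cast; rfl
  have h2R : (cnt2 s t true true : ℝ) + (cnt2 s t false true : ℝ) = X := by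
    rw [← Nat.cast_add, h2]; push_cast; rfl
  have htotR : (cnt2 s t true true : ℝ) + (cnt2 s t true false : ℝ)
      + ((cnt2 s t false true : ℝ) + (cnt2 s t false false : ℝ)) = X * 8 := by
    rw [← Nat.cast_add, ← Nat.cast_add, ← Nat.cast_add, htot]
    push_cast
    rw [hpow]; ring
  have eq1 : T * (1/8) * q1 = Y := by
    simp only [hT, hq1, hY]
    field_simp
    rw [hpow]; ring
  have eq2 : T * (1/8) * (1 - q1) = X - Y := by
    simp only [hT, hq1, hY, hX]
    field_simp
    rw [hpow]; ring
  have eq3 : T * (7/8) * ((1 - q1) / 7) = X - Y := by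
    simp only [hT, hq1, hY, hX]
    field_simp
    rw [hpow]; ring
  have eq4 : T * (7/8) * (1 - (1 - q1) / 7) = 6 * X + Y := by
    simp only [hT, hq1, hY, hX]
    field_simp
    rw [hpow]; ring
  exact ⟨⟨by rw [h11R]; exact eq1.symm, by rw [eq2]; linarith⟩,
    by rw [eq3]; linarith, by rw [eq4]; linarith⟩

lemma card_B_fiber {m k k' x : ℕ} (A : Finset (Fin m)) (hA : A.card = k) (hx : x ≤ k') :
    ((powersetCard k' (univ : Finset (Fin m))).filter fun B => (A ∩ B).card = x).card
      = k.choose x * ((m - k).choose (k' - x)) := by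
  have hcompl : Aᶜ.card = m - k := by
    rw [Finset.card_compl, hA]; simp
  rw [show k.choose x * ((m - k).choose (k' - x))
      = ((powersetCard x A) ×ˢ (powersetCard (k' - x) Aᶜ)).card by
    rw [Finset.card_product, Finset.card_powersetCard, Finset.card_powersetCard, hA, hcompl]]
  apply Finset.card_bij' (fun B _ => (A ∩ B, B \ A)) (fun PQ _ => PQ.1 ∪ PQ.2)
  · intro B hB
    simp only [mem_filter, Finset.mem_powersetCard] at hB
    obtain ⟨⟨-, hBk⟩, hABx⟩ := hB
    simp only [Finset.mem_product, Finset.mem_powersetCard]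
    refine ⟨⟨Finset.inter_subset_left, hABx⟩, fun i hi => ?_, ?_⟩
    · rw [Finset.mem_compl]; exact (Finset.mem_sdiff.mp hi).2
    · have h1 := Finset.card_inter_add_card_sdiff B A
      rw [Finset.inter_comm] at h1
      omega
  · intro PQ hPQ
    simp only [Finset.mem_product, Finset.mem_powersetCard] at hPQ
    obtain ⟨⟨hPA, hPx⟩, hQA, hQx⟩ := hPQ
    have hdisj : Disjoint PQ.1 PQ.2 := by
      refine Finset.disjoint_left.mpr fun i hiP hiQ => ?_
      exact (Finset.mem_compl.mp (hQA hiQ)) (hPA hiP)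
    simp only [mem_filter, Finset.mem_powersetCard]
    refine ⟨⟨Finset.subset_univ _, ?_⟩, ?_⟩
    · rw [Finset.card_union_of_disjoint hdisj, hPx, hQx]; omega
    · have h : A ∩ (PQ.1 ∪ PQ.2) = PQ.1 := by
        ext i
        simp only [Finset.mem_inter, Finset.mem_union]
        constructor
        · rintro ⟨hiA, hiP | hiQ⟩
          · exact hiP
          · exact absurd hiA (Finset.mem_compl.mp (hQA hiQ))
        · intro hiP; exact ⟨hPA hiP, Or.inl hiP⟩
      rw [h, hPx]
  · intro B hB
    ext i
    simp only [Finset.mem_union, Finset.mem_inter, Finset.mem_sdiff]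
    tauto
  · intro PQ hPQ
    simp only [Finset.mem_product, Finset.mem_powersetCard] at hPQ
    obtain ⟨⟨hPA, hPx⟩, hQA, hQx⟩ := hPQ
    have h1 : A ∩ (PQ.1 ∪ PQ.2) = PQ.1 := by
      ext i
      simp only [Finset.mem_inter, Finset.mem_union]
      constructor
      · rintro ⟨hiA, hiP | hiQ⟩
        · exact hiP
        · exact absurd hiA (Finset.mem_compl.mp (hQA hiQ))
      · intro hiP; exact ⟨hPA hiP, Or.inl hiP⟩
    have h2 : (PQ.1 ∪ PQ.2) \ A = PQ.2 := by
      ext i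
      simp only [Finset.mem_sdiff, Finset.mem_union]
      constructor
      · rintro ⟨hiP | hiQ, hiA⟩
        · exact absurd (hPA hiP) hiA
        · exact hiQ
      · intro hiQ; exact ⟨Or.inr hiQ, Finset.mem_compl.mp (hQA hiQ)⟩
    rw [h1, h2]

lemma card_sphere {n : ℕ} (s : Fin n → Bool) (d : ℕ) :
    ((univ : Finset (Fin n → Bool)).filter
        fun t => (univ.filter fun i => s i ≠ t i).card = d).card = n.choose d := by
  rw [show n.choose d = (powersetCard d (univ : Finset (Fin n))).card by
    rw [Finset.card_powersetCard]; simp]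
  apply Finset.card_bij' (fun t _ => univ.filter fun i => s i ≠ t i)
    (fun D _ => fun i => if i ∈ D then !s i else s i)
  · intro t ht
    simp only [mem_filter, mem_univ, true_and] at ht
    rw [Finset.mem_powersetCard]
    exact ⟨Finset.subset_univ _, ht⟩
  · intro D hD
    rw [Finset.mem_powersetCard] at hD
    simp only [mem_filter, mem_univ, true_and]
    rw [← hD.2]
    congr 1
    ext i
    by_cases hi : i ∈ D <;> simp [hi]
  · intro t ht
    ext i
    by_cases hi : s i = t i <;> simp only [mem_filter, mem_univ, true_and, hi,
      if_true, if_false, not_true, not_false_iff, if_neg, if_pos] <;>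
      revert hi <;> cases s i <;> cases t i <;> simp
  · intro D hD
    ext i
    by_cases hi : i ∈ D <;> simp [hi]

lemma fiber_card {n m : ℕ} (s t : Fin n → Bool) (A B : Finset (Fin m)) :
    (univ.filter fun ω : Inst n m =>
        ∀ a, (violated s (ω a) ↔ a ∈ A) ∧ (violated t (ω a) ↔ a ∈ B)).card
      = cnt2 s t true true ^ (A ∩ B).card * cnt2 s t true false ^ (A \ B).card *
        cnt2 s t false true ^ (B \ A).card * cnt2 s t false false ^ (m - (A ∪ B).card) := by
  rw [SAT18.card_pi_filter
    (fun a => univ.filter fun c : Clause n =>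
      (violated s c ↔ a ∈ A) ∧ (violated t c ↔ a ∈ B)) _
    (fun ω => by simp)]
  have hterm : ∀ a : Fin m,
      (univ.filter fun c : Clause n =>
        (violated s c ↔ a ∈ A) ∧ (violated t c ↔ a ∈ B)).card
      = cnt2 s t (decide (a ∈ A)) (decide (a ∈ B)) := by
    intro a
    unfold cnt2
    congr 1
    apply Finset.filter_congr
    intro c _
    by_cases hA : a ∈ A <;> by_cases hB : a ∈ B <;> simp [hA, hB]
  simp only [hterm]
  have hdecomp : (univ : Finset (Fin m)) = ((A ∩ B) ∪ (A \ B)) ∪ ((B \ A) ∪ (A ∪ B)ᶜ) := by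
    ext a; simp only [mem_univ, mem_union, mem_inter, mem_sdiff, mem_compl, true_iff]; tauto
  have d1 : Disjoint (A ∩ B) (A \ B) := by
    rw [Finset.disjoint_left]; intro a h1 h2
    exact (mem_sdiff.mp h2).2 (mem_inter.mp h1).2
  have d2 : Disjoint (B \ A) ((A ∪ B)ᶜ) := by
    rw [Finset.disjoint_left]; intro a h1 h2
    exact (mem_compl.mp h2) (mem_union_right _ (mem_sdiff.mp h1).1)
  have d3 : Disjoint ((A ∩ B) ∪ (A \ B)) ((B \ A) ∪ (A ∪ B)ᶜ) := by
    rw [Finset.disjoint_left]; intro a h1 h2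
    simp only [mem_union, mem_inter, mem_sdiff, mem_compl] at h1 h2
    tauto
  rw [hdecomp, Finset.prod_union d3, Finset.prod_union d1, Finset.prod_union d2]
  have e1 : ∏ a ∈ A ∩ B, cnt2 s t (decide (a ∈ A)) (decide (a ∈ B))
      = cnt2 s t true true ^ (A ∩ B).card := by
    rw [← Finset.prod_const]
    apply Finset.prod_congr rfl
    intro a ha
    simp only [mem_inter] at ha
    rw [decide_eq_true ha.1, decide_eq_true ha.2]
  have e2 : ∏ a ∈ A \ B, cnt2 s t (decide (a ∈ A)) (decide (a ∈ B))
      = cnt2 s t true false ^ (A \ B).card := by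
    rw [← Finset.prod_const]
    apply Finset.prod_congr rfl
    intro a ha
    simp only [mem_sdiff] at ha
    rw [decide_eq_true ha.1, decide_eq_false ha.2]
  have e3 : ∏ a ∈ B \ A, cnt2 s t (decide (a ∈ A)) (decide (a ∈ B))
      = cnt2 s t false true ^ (B \ A).card := by
    rw [← Finset.prod_const]
    apply Finset.prod_congr rfl
    intro a ha
    simp only [mem_sdiff] at ha
    rw [decide_eq_true ha.1, decide_eq_false ha.2]
  have e4 : ∏ a ∈ (A ∪ B)ᶜ, cnt2 s t (decide (a ∈ A)) (decide (a ∈ B))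
      = cnt2 s t false false ^ (m - (A ∪ B).card) := by
    have hcard : (A ∪ B)ᶜ.card = m - (A ∪ B).card := by
      rw [Finset.card_compl]; simp
    rw [← hcard, ← Finset.prod_const]
    apply Finset.prod_congr rfl
    intro a ha
    simp only [mem_compl, mem_union] at ha
    push_neg at ha
    rw [decide_eq_false ha.1, decide_eq_false ha.2]
  rw [e1, e2, e3, e4]
  ring

lemma cntPair_eq {n m : ℕ} (s t : Fin n → Bool) (k k' : ℕ) :
    (univ.filter fun ω : Inst n m => energy s ω = k ∧ energy t ω = k').card
      = ∑ x ∈ range (k' + 1), m.choose k * (k.choose x * (m - k).choose (k' - x)) *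
          (cnt2 s t true true ^ x * cnt2 s t true false ^ (k - x) *
           cnt2 s t false true ^ (k' - x) * cnt2 s t false false ^ (m - k - (k' - x))) := by
  classical
  set Φ : Inst n m → Finset (Fin m) × Finset (Fin m) :=
    fun ω => (univ.filter fun a => violated s (ω a), univ.filter fun a => violated t (ω a))
    with hΦ
  rw [Finset.card_eq_sum_card_fiberwise (f := Φ)
    (t := powersetCard k (univ : Finset (Fin m)) ×ˢ powersetCard k' (univ : Finset (Fin m)))
    (fun ω hω => by
      simp only [Finset.mem_coe, mem_filter, mem_univ, true_and] at hω
      simp only [Finset.mem_coe, Finset.mem_product, Finset.mem_powersetCard, hΦ]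
      exact ⟨⟨subset_univ _, hω.1⟩, subset_univ _, hω.2⟩)]
  rw [Finset.sum_product]
  have key : ∀ A ∈ powersetCard k (univ : Finset (Fin m)),
      ∀ B ∈ powersetCard k' (univ : Finset (Fin m)),
      ((univ.filter fun ω : Inst n m => energy s ω = k ∧ energy t ω = k').filter
          fun ω => Φ ω = (A, B)).card
        = cnt2 s t true true ^ (A ∩ B).card * cnt2 s t true false ^ (A \ B).card *
          cnt2 s t false true ^ (B \ A).card * cnt2 s t false false ^ (m - (A ∪ B).card) := by
    intro A hA B hB
    rw [Finset.mem_powersetCard] at hA hB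
    rw [← fiber_card s t A B]
    congr 1
    rw [Finset.filter_filter]
    apply Finset.filter_congr
    intro ω _
    constructor
    · rintro ⟨-, hΦω⟩ a
      rw [hΦ, Prod.mk.injEq] at hΦω
      constructor
      · rw [← hΦω.1]; simp
      · rw [← hΦω.2]; simp
    · intro h
      have hfs : (univ.filter fun a => violated s (ω a)) = A := by
        ext a; simpa using (h a).1
      have hft : (univ.filter fun a => violated t (ω a)) = B := by
        ext a; simpa using (h a).2
      refine ⟨⟨?_, ?_⟩, ?_⟩
      · rw [energy, hfs, hA.2]
      · rw [energy, hft, hB.2]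
      · rw [hΦ]; exact Prod.ext (by simpa using hfs) (by simpa using hft)
  rw [Finset.sum_congr rfl fun A hA => Finset.sum_congr rfl fun B hB => key A hA B hB]
  have inner : ∀ A ∈ powersetCard k (univ : Finset (Fin m)),
      (∑ B ∈ powersetCard k' (univ : Finset (Fin m)),
        cnt2 s t true true ^ (A ∩ B).card * cnt2 s t true false ^ (A \ B).card *
          cnt2 s t false true ^ (B \ A).card * cnt2 s t false false ^ (m - (A ∪ B).card))
      = ∑ x ∈ range (k' + 1), (k.choose x * (m - k).choose (k' - x)) *
          (cnt2 s t true true ^ x * cnt2 s t true false ^ (k - x) *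
           cnt2 s t false true ^ (k' - x) * cnt2 s t false false ^ (m - k - (k' - x))) := by
    intro A hA
    rw [Finset.mem_powersetCard] at hA
    rw [← Finset.sum_fiberwise_of_maps_to (g := fun B => (A ∩ B).card)
      (t := range (k' + 1)) (fun B hB => by
        rw [Finset.mem_powersetCard] at hB
        rw [Finset.mem_range, Nat.lt_succ_iff, ← hB.2]
        exact card_le_card Finset.inter_subset_right)]
    apply Finset.sum_congr rfl
    intro x hx
    rw [Finset.mem_range, Nat.lt_succ_iff] at hx
    have step : ∀ B ∈ (powersetCard k' (univ : Finset (Fin m))).filter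
        (fun B => (A ∩ B).card = x),
        cnt2 s t true true ^ (A ∩ B).card * cnt2 s t true false ^ (A \ B).card *
          cnt2 s t false true ^ (B \ A).card * cnt2 s t false false ^ (m - (A ∪ B).card)
        = cnt2 s t true true ^ x * cnt2 s t true false ^ (k - x) *
           cnt2 s t false true ^ (k' - x) * cnt2 s t false false ^ (m - k - (k' - x)) := by
      intro B hB
      simp only [mem_filter, Finset.mem_powersetCard] at hB
      obtain ⟨⟨-, hBc⟩, hABx⟩ := hB
      have c1 := Finset.card_inter_add_card_sdiff A B
      have c2 := Finset.card_inter_add_card_sdiff B A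
      have c3 := Finset.card_union_add_card_inter A B
      rw [Finset.inter_comm B A] at c2
      have e1 : (A \ B).card = k - x := by omega
      have e2 : (B \ A).card = k' - x := by omega
      have e3 : m - (A ∪ B).card = m - k - (k' - x) := by omega
      rw [hABx, e1, e2, e3]
    rw [Finset.sum_congr rfl step, Finset.sum_const, card_B_fiber A hA.2 hx, smul_eq_mul]
  rw [Finset.sum_congr rfl inner]
  rw [Finset.sum_const, smul_eq_mul, Finset.card_powersetCard, card_univ, Fintype.card_fin,
    Finset.mul_sum]
  apply Finset.sum_congr rfl
  intro x _
  ring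

lemma pCond_eq_range {n m k k' d : ℕ} (hk : k ≤ m) :
    pCond n m k k' d = ∑ x ∈ range (k' + 1),
      binomProb x k (((n - d).choose 3 : ℝ) / (n.choose 3 : ℝ)) *
        binomProb (k' - x) (m - k) ((1 - ((n - d).choose 3 : ℝ) / (n.choose 3 : ℝ)) / 7) := by
  unfold pCond
  apply Finset.sum_subset
  · intro x hx
    rw [Finset.mem_Icc] at hx
    rw [Finset.mem_range, Nat.lt_succ_iff]
    omega
  · intro x hx hx2
    rw [Finset.mem_range, Nat.lt_succ_iff] at hx
    rw [Finset.mem_Icc] at hx2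
    push_neg at hx2
    by_cases hlo : max (k + k' - m) 0 ≤ x
    · have hhi := hx2 hlo
      have hxk : k < x := by omega
      unfold binomProb
      rw [Nat.choose_eq_zero_of_lt hxk]
      push_cast; ring
    · have : m - k < k' - x := by omega
      unfold binomProb
      rw [Nat.choose_eq_zero_of_lt this]
      push_cast; ring

lemma pCond_zero {n m k k' : ℕ} (hn : 3 ≤ n) (hk : k ≤ m) (hk' : k' ≤ m) :
    pCond n m k k' 0 = if k = k' then (1:ℝ) else 0 := by
  have hc : (n.choose 3 : ℝ) ≠ 0 := Nat.cast_ne_zero.mpr (Nat.choose_pos hn).ne'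
  have hq : ((n - 0).choose 3 : ℝ) / (n.choose 3 : ℝ) = 1 := by
    rw [Nat.sub_zero]; exact div_self hc
  unfold pCond
  rw [hq]
  by_cases hkk : k = k'
  · subst hkk
    rw [if_pos rfl]
    rw [Finset.sum_eq_single k]
    · unfold binomProb
      simp
    · intro x hx hxk
      rw [Finset.mem_Icc] at hx
      have hxlt : x < k := by omega
      unfold binomProb
      have : (1:ℝ) - 1 = 0 := by ring
      rw [this, zero_pow (by omega : k - x ≠ 0)]
      ring
    · intro h
      exfalso
      apply h
      rw [Finset.mem_Icc]
      omega
  · rw [if_neg hkk]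
    apply Finset.sum_eq_zero
    intro x hx
    rw [Finset.mem_Icc] at hx
    by_cases hxk : x = k
    · subst hxk
      have hne : k' - x ≠ 0 := by omega
      unfold binomProb
      norm_num [zero_pow hne]
    · have hne : k - x ≠ 0 := by omega
      unfold binomProb
      norm_num [zero_pow hne]

lemma term_id {m k k' x : ℕ} (hk : k ≤ m) (hx : x ≤ k') (hxk : x ≤ k)
    (hxm : k' - x ≤ m - k) (T q1 : ℝ) :
    (m.choose k : ℝ) * ((k.choose x : ℝ) * ((m - k).choose (k' - x) : ℝ)) *
        ((T * (1/8) * q1) ^ x * (T * (1/8) * (1 - q1)) ^ (k - x) *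
         (T * (7/8) * ((1 - q1) / 7)) ^ (k' - x) *
         (T * (7/8) * (1 - (1 - q1) / 7)) ^ (m - k - (k' - x)))
      = T ^ m * binomProb k m (1/8) *
        (binomProb x k q1 * binomProb (k' - x) (m - k) ((1 - q1) / 7)) := by
  unfold binomProb
  have hTm : T ^ m = T ^ x * T ^ (k - x) * T ^ (k' - x) * T ^ (m - k - (k' - x)) := by
    rw [← pow_add, ← pow_add, ← pow_add]
    congr 1
    omega
  have h8 : ((1:ℝ)/8) ^ k = (1/8) ^ x * (1/8) ^ (k - x) := by
    rw [← pow_add]; congr 1; omega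
  have h78 : ((1:ℝ) - 1/8) ^ (m - k)
      = (1 - 1/8) ^ (k' - x) * (1 - 1/8) ^ (m - k - (k' - x)) := by
    rw [← pow_add]; congr 1; omega
  simp only [mul_pow]
  rw [hTm, h8, h78]
  ring

lemma cntPair_real {n m : ℕ} (hn : 3 ≤ n) (k k' : ℕ) (hk : k ≤ m) (hk' : k' ≤ m)
    (s t : Fin n → Bool) :
    ((univ.filter fun ω : Inst n m => energy s ω = k ∧ energy t ω = k').card : ℝ)
      = ((n.choose 3 : ℝ) * 2 ^ n) ^ m * binomProb k m (1/8) *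
        pCond n m k k' ((univ.filter fun i => s i ≠ t i).card) := by
  obtain ⟨⟨r11, r10⟩, r01, r00⟩ := cnt2_real s t hn
  set d := (univ.filter fun i : Fin n => s i ≠ t i).card
  set q1 : ℝ := ((n - d).choose 3 : ℝ) / (n.choose 3 : ℝ) with hq1
  set T : ℝ := (n.choose 3 : ℝ) * 2 ^ n with hT
  rw [cntPair_eq s t k k', pCond_eq_range hk]
  push_cast
  rw [Finset.mul_sum]
  apply Finset.sum_congr rfl
  intro x hx
  rw [Finset.mem_range, Nat.lt_succ_iff] at hx
  rw [r11, r10, r01, r00]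
  by_cases hxk : x ≤ k
  · by_cases hxm : k' - x ≤ m - k
    · exact term_id hk hx hxk hxm T q1
    · push_neg at hxm
      rw [Nat.choose_eq_zero_of_lt hxm]
      unfold binomProb
      rw [Nat.choose_eq_zero_of_lt hxm]
      push_cast
      ring
  · push_neg at hxk
    rw [Nat.choose_eq_zero_of_lt hxk]
    unfold binomProb
    rw [Nat.choose_eq_zero_of_lt hxk]
    push_cast
    ring

end SAT18

end Aux

/-- the second moment of the density of states of random 3-SAT satisfies
`E[n_k·n_{k'}] = (p_k/N)·(δ_{k,k'} + ∑_{d=1}^n C(n,d)·p(k'|k,d))`. -/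
theorem stmt_18 (n m : ℕ) (hn : 3 ≤ n) (hm : 1 ≤ m)
    (k k' : ℕ) (hk : k ≤ m) (hk' : k' ≤ m) :
    (∑ ω : Inst n m, densStates ω k * densStates ω k') / (Fintype.card (Inst n m)) =
      binomProb k m (1 / 8) / 2 ^ n *
        ((if k = k' then (1 : ℝ) else 0) +
          ∑ d ∈ Finset.Icc 1 n, (n.choose d : ℝ) * pCond n m k k' d) := by
  classical
  set CC : ℝ := (n.choose 3 : ℝ) * 2 ^ n with hCCdef
  have hCpos : (0:ℝ) < (n.choose 3 : ℝ) := by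
    exact_mod_cast Nat.choose_pos hn
  have hCCpos : (0:ℝ) < CC := by positivity
  have hcard : (Fintype.card (Inst n m) : ℝ) = CC ^ m := by
    rw [show Fintype.card (Inst n m) = Fintype.card (Clause n) ^ m by
      rw [Fintype.card_fun]; simp]
    rw [SAT18.card_clause]
    push_cast
    rfl
  -- expand the LHS sum
  have hcf : ∀ {α : Type} [Fintype α] (p : α → Prop) [DecidablePred p],
      ((univ.filter p).card : ℝ) = ∑ s : α, if p s then (1:ℝ) else 0 := by
    intro α _ p _
    rw [Finset.card_filter]
    push_cast
    apply Finset.sum_congr rfl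
    intro s _
    split <;> simp
  have expand : (∑ ω : Inst n m, densStates ω k * densStates ω k')
      = (∑ s : Fin n → Bool, ∑ t : Fin n → Bool,
          ((univ.filter fun ω : Inst n m => energy s ω = k ∧ energy t ω = k').card : ℝ))
        / (2 ^ n * 2 ^ n) := by
    have e1 : ∀ ω : Inst n m, densStates ω k * densStates ω k'
        = (∑ s : Fin n → Bool, ∑ t : Fin n → Bool,
            (if energy s ω = k then (1:ℝ) else 0) *
              (if energy t ω = k' then (1:ℝ) else 0)) / (2 ^ n * 2 ^ n) := by
      intro ω
      unfold densStates
      rw [div_mul_div_comm]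
      congr 1
      rw [hcf, hcf, Finset.sum_mul_sum]
    rw [Finset.sum_congr rfl fun ω _ => e1 ω, ← Finset.sum_div]
    congr 1
    rw [Finset.sum_comm]
    apply Finset.sum_congr rfl
    intro s _
    rw [Finset.sum_comm]
    apply Finset.sum_congr rfl
    intro t _
    rw [hcf (fun ω : Inst n m => energy s ω = k ∧ energy t ω = k')]
    apply Finset.sum_congr rfl
    intro ω _
    by_cases h1 : energy s ω = k <;> by_cases h2 : energy t ω = k' <;>
      simp [h1, h2]
  rw [expand]
  have key : ∀ s t : Fin n → Bool,
      ((univ.filter fun ω : Inst n m => energy s ω = k ∧ energy t ω = k').card : ℝ)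
        = CC ^ m * binomProb k m (1/8) *
          pCond n m k k' ((univ.filter fun i => s i ≠ t i).card) :=
    fun s t => SAT18.cntPair_real hn k k' hk hk' s t
  simp only [key]
  -- sum over t fiberwise in the distance
  have sumt : ∀ s : Fin n → Bool,
      (∑ t : Fin n → Bool, CC ^ m * binomProb k m (1/8) *
        pCond n m k k' ((univ.filter fun i => s i ≠ t i).card))
      = CC ^ m * binomProb k m (1/8) *
        ((if k = k' then (1:ℝ) else 0)
          + ∑ d ∈ Finset.Icc 1 n, (n.choose d : ℝ) * pCond n m k k' d) := by
    intro s
    rw [← Finset.sum_fiberwise_of_maps_to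
      (g := fun t : Fin n → Bool => (univ.filter fun i => s i ≠ t i).card)
      (t := range (n + 1)) (fun t _ => by
        rw [Finset.mem_range, Nat.lt_succ_iff]
        calc (univ.filter fun i => s i ≠ t i).card ≤ (univ : Finset (Fin n)).card :=
              card_le_card (filter_subset _ _)
          _ = n := by simp)]
    have inner : ∀ d ∈ range (n + 1),
        (∑ t ∈ univ.filter fun t : Fin n → Bool =>
            (univ.filter fun i => s i ≠ t i).card = d,
          CC ^ m * binomProb k m (1/8) *
            pCond n m k k' ((univ.filter fun i => s i ≠ t i).card))
        = (n.choose d : ℝ) * (CC ^ m * binomProb k m (1/8) * pCond n m k k' d) := by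
      intro d _
      trans (∑ _t ∈ univ.filter fun t : Fin n → Bool =>
          (univ.filter fun i => s i ≠ t i).card = d,
          CC ^ m * binomProb k m (1/8) * pCond n m k k' d)
      · apply Finset.sum_congr rfl
        intro t ht
        rw [mem_filter] at ht
        rw [ht.2]
      · rw [Finset.sum_const, SAT18.card_sphere, nsmul_eq_mul]
    rw [Finset.sum_congr rfl inner]
    have hsplit : range (n + 1) = insert 0 (Finset.Icc 1 n) := by
      ext x
      simp only [Finset.mem_range, Finset.mem_insert, Finset.mem_Icc]
      omega
    rw [hsplit, Finset.sum_insert (by simp)]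
    rw [SAT18.pCond_zero hn hk hk', Nat.choose_zero_right]
    rw [mul_add, Finset.mul_sum]
    congr 1
    · push_cast; ring
    · apply Finset.sum_congr rfl
      intro d _
      ring
  simp only [sumt]
  rw [Finset.sum_const, nsmul_eq_mul, Finset.card_univ]
  have h2n : (Fintype.card (Fin n → Bool) : ℝ) = 2 ^ n := by
    simp
  rw [h2n, hcard]
  have hCCm : (CC:ℝ) ^ m ≠ 0 := by positivity
  have h2pos : ((2:ℝ) ^ n) ≠ 0 := by positivity
  field_simp
end
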